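/- arXiv:1412.6925 — 10 statements merged into one kernel-verified Lean document; each statement's English description precedes it below -/
import Mathlib

section
/- Let N > n ≥ 1 and let 0 ≤ k ≤ n. Define P^k := {x : Fin N → EuclideanSpace ℝ (Fin n) | Module.finrank ℝ (vectorSpan ℝ (Set.range x)) = k} and d_k := k*(N + n - 1) + n - k^2. Then for every p ∈ P^k there exist open sets U and V in the space Fin N → EuclideanSpace ℝ (Fin n) with p ∈ U, a map f : (Fin N → EuclideanSpace ℝ (Fin n)) → (Fin N → EuclideanSpace ℝ (Fin n)) that restricts to a homeomorphism from U onto V, with f infinitely differentiable on U and its inverse infinitely differentiable on V (ContDiffOn ℝ ⊤), and an ℝ-submodule L of Fin N → EuclideanSpace ℝ (Fin n) with Module.finrank ℝ L = d_k, such that f '' (U ∩ P^k) = V ∩ (L : Set (Fin N → EuclideanSpace ℝ (Fin n))). -/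
open Module Submodule Set Matrix

noncomputable section

namespace RkAux

variable {X : Type*} [NormedAddCommGroup X] [NormedSpace ℝ X]

variable {X : Type*} [NormedAddCommGroup X] [NormedSpace ℝ X]

lemma contDiffOn_finset_prod {ι : Type*} {f : ι → X → ℝ} {s : Set X} (t : Finset ι)
    (h : ∀ i ∈ t, ContDiffOn ℝ (⊤ : ℕ∞) (f i) s) :
    ContDiffOn ℝ (⊤ : ℕ∞) (fun x => ∏ i ∈ t, f i x) s := by
  classical
  induction t using Finset.induction with
  | empty => simpa using contDiffOn_const
  | insert a t hx ih =>
    simp only [Finset.prod_insert hx]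
    exact (h a (Finset.mem_insert_self a t)).mul
      (ih fun i hi => h i (Finset.mem_insert_of_mem hi))

lemma contDiffOn_det {ι : Type*} [Fintype ι] [DecidableEq ι] {f : X → Matrix ι ι ℝ} {s : Set X}
    (h : ∀ i j, ContDiffOn ℝ (⊤ : ℕ∞) (fun x => f x i j) s) :
    ContDiffOn ℝ (⊤ : ℕ∞) (fun x => (f x).det) s := by
  simp_rw [Matrix.det_apply, Units.smul_def, zsmul_eq_mul]
  exact ContDiffOn.sum fun σ _ =>
    contDiffOn_const.mul (contDiffOn_finset_prod _ fun i _ => h (σ i) i)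

lemma contDiffOn_adjugate {ι : Type*} [Fintype ι] [DecidableEq ι] {f : X → Matrix ι ι ℝ}
    {s : Set X} (h : ∀ i j, ContDiffOn ℝ (⊤ : ℕ∞) (fun x => f x i j) s) (a b : ι) :
    ContDiffOn ℝ (⊤ : ℕ∞) (fun x => (f x).adjugate a b) s := by
  simp_rw [Matrix.adjugate_apply]
  refine contDiffOn_det fun i j => ?_
  rcases eq_or_ne i b with rfl | hib
  · simp only [Matrix.updateRow_self]
    exact contDiffOn_const
  · simp only [Matrix.updateRow_ne hib]
    exact h i j

lemma finrank_span_range_comp_equiv {K V : Type*} [Field K] [AddCommGroup V] [Module K V]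
    {ι ι' : Type*} (e : ι' ≃ ι) (v : ι → V) :
    finrank K (span K (Set.range (v ∘ e))) = finrank K (span K (Set.range v)) := by
  rw [Set.range_comp, e.surjective.range_eq, Set.image_univ]

lemma rank_submatrix' {m m' n n' : Type*} [Fintype m] [Fintype m'] [Fintype n] [Fintype n']
    (A : Matrix m n ℝ) (e₁ : m' ≃ m) (e₂ : n' ≃ n) :
    (A.submatrix e₁ e₂).rank = A.rank := by
  rw [Matrix.rank_eq_finrank_span_row, Matrix.rank_eq_finrank_span_row]
  have hrange : Set.range (A.submatrix e₁ e₂).row =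
      (LinearEquiv.funCongrLeft ℝ ℝ e₂ : (n → ℝ) →ₗ[ℝ] (n' → ℝ)) '' Set.range (A.row ∘ e₁) := by
    rw [← Set.range_comp]
    rfl
  rw [hrange, ← Submodule.map_span, LinearEquiv.finrank_map_eq,
    finrank_span_range_comp_equiv]

lemma finrank_prod_submodule {V W : Type*} [AddCommGroup V] [Module ℝ V] [AddCommGroup W]
    [Module ℝ W] [FiniteDimensional ℝ V] [FiniteDimensional ℝ W]
    (p : Submodule ℝ V) (q : Submodule ℝ W) :
    finrank ℝ (p.prod q) = finrank ℝ p + finrank ℝ q := by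
  have e : ↥(p.prod q) ≃ₗ[ℝ] ↥p × ↥q :=
    { toFun := fun x => (⟨x.1.1, x.2.1⟩, ⟨x.1.2, x.2.2⟩)
      map_add' := fun a b => rfl
      map_smul' := fun a b => rfl
      invFun := fun y => ⟨(y.1.1, y.2.1), ⟨y.1.2, y.2.2⟩⟩
      left_inv := fun a => rfl
      right_inv := fun a => rfl }
  rw [e.finrank_eq, Module.finrank_prod]

lemma rank_fromBlocks_one_zero_zero {k : ℕ} {m' n' : Type*} [Fintype m'] [Fintype n']
    [DecidableEq m'] [DecidableEq n'] (S : Matrix m' n' ℝ) :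
    (Matrix.fromBlocks (1 : Matrix (Fin k) (Fin k) ℝ) 0 0 S).rank = k + S.rank := by
  classical
  set F := (Matrix.fromBlocks (1 : Matrix (Fin k) (Fin k) ℝ) 0 0 S).mulVecLin
  set ψ := LinearEquiv.sumArrowLequivProdArrow (Fin k) m' ℝ ℝ with hψ
  have hF : ∀ x, F x = Sum.elim (x ∘ Sum.inl) (S.mulVec (x ∘ Sum.inr)) := by
    intro x
    show (Matrix.fromBlocks 1 0 0 S).mulVec x = _
    rw [Matrix.fromBlocks_mulVec]
    simp [Matrix.one_mulVec, Matrix.zero_mulVec]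
  have hmap : Submodule.map (ψ : ((Fin k ⊕ m') → ℝ) →ₗ[ℝ] ((Fin k → ℝ) × (m' → ℝ)))
      (LinearMap.range F) =
      (⊤ : Submodule ℝ (Fin k → ℝ)).prod (LinearMap.range S.mulVecLin) := by
    ext ⟨u, v⟩
    simp only [Submodule.mem_map, LinearMap.mem_range, Submodule.mem_prod,
      Submodule.mem_top, true_and]
    constructor
    · rintro ⟨y, ⟨x, rfl⟩, hy⟩
      refine ⟨x ∘ Sum.inr, ?_⟩
      have h2 := congrArg Prod.snd hy
      rw [hF] at h2
      exact h2
    · rintro ⟨w, hw⟩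
      refine ⟨Sum.elim u v, ⟨Sum.elim u w, ?_⟩, rfl⟩
      rw [hF]
      simp only [Sum.elim_comp_inl, Sum.elim_comp_inr]
      rw [show S.mulVec w = v from hw]
  have : (Matrix.fromBlocks (1 : Matrix (Fin k) (Fin k) ℝ) 0 0 S).rank =
      finrank ℝ (Submodule.map (ψ : ((Fin k ⊕ m') → ℝ) →ₗ[ℝ] ((Fin k → ℝ) × (m' → ℝ))) (LinearMap.range F)) := by
    rw [LinearEquiv.finrank_map_eq]
    rfl
  rw [this, hmap, finrank_prod_submodule, finrank_top, Module.finrank_pi, Fintype.card_fin]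
  rfl

lemma rank_eq_zero_iff' {m' n' : Type*} [Fintype m'] [Fintype n'] [DecidableEq n']
    (S : Matrix m' n' ℝ) : S.rank = 0 ↔ S = 0 := by
  constructor
  · intro h
    have h2 : LinearMap.range S.mulVecLin = ⊥ := by
      rw [Matrix.rank] at h
      exact Submodule.finrank_eq_zero.mp h
    have h3 : ∀ v, S.mulVec v = 0 := by
      intro v
      have : S.mulVecLin v ∈ LinearMap.range S.mulVecLin := LinearMap.mem_range_self _ v
      rw [h2, Submodule.mem_bot] at this
      exact this
    ext i j
    have := congrFun (h3 (Pi.single j 1)) i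
    simpa using this
  · rintro rfl
    exact Matrix.rank_zero

lemma rank_fromBlocks_of_isUnit {k : ℕ} {m' n' : Type*} [Fintype m'] [Fintype n']
    [DecidableEq m'] [DecidableEq n']
    (A : Matrix (Fin k) (Fin k) ℝ) (B : Matrix (Fin k) n' ℝ) (C : Matrix m' (Fin k) ℝ)
    (D : Matrix m' n' ℝ) (hA : IsUnit A.det) :
    (fromBlocks A B C D).rank = k + (D - C * A⁻¹ * B).rank := by
  classical
  set S := D - C * A⁻¹ * B with hS
  set Lm : Matrix (Fin k ⊕ m') (Fin k ⊕ m') ℝ := fromBlocks 1 0 (C * A⁻¹) 1 with hL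
  set Dg : Matrix (Fin k ⊕ m') (Fin k ⊕ m') ℝ := fromBlocks A 0 0 1 with hDg
  set Mid : Matrix (Fin k ⊕ m') (Fin k ⊕ n') ℝ := fromBlocks 1 0 0 S with hMid
  set Uu : Matrix (Fin k ⊕ n') (Fin k ⊕ n') ℝ := fromBlocks 1 (A⁻¹ * B) 0 1 with hU
  have h1 : Mid * Uu = fromBlocks 1 (A⁻¹ * B) 0 S := by
    rw [hMid, hU, Matrix.fromBlocks_multiply]
    simp
  have h2 : Dg * (Mid * Uu) = fromBlocks A B 0 S := by
    rw [h1, hDg, Matrix.fromBlocks_multiply]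
    simp [Matrix.mul_nonsing_inv_cancel_left A B hA]
  have h3 : Lm * (Dg * (Mid * Uu)) = fromBlocks A B C D := by
    rw [h2, hL, Matrix.fromBlocks_multiply]
    simp [Matrix.mul_assoc, Matrix.nonsing_inv_mul A hA, hS]
  have hdetL : IsUnit Lm.det := by
    rw [hL, Matrix.det_fromBlocks_zero₁₂]
    simp
  have hdetDg : IsUnit Dg.det := by
    rw [hDg, Matrix.det_fromBlocks_zero₁₂]
    simpa using hA
  have hdetU : IsUnit Uu.det := by
    rw [hU, Matrix.det_fromBlocks_zero₂₁]
    simp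
  calc (fromBlocks A B C D).rank = (Lm * (Dg * (Mid * Uu))).rank := by rw [h3]
    _ = (Dg * (Mid * Uu)).rank := Matrix.rank_mul_eq_right_of_isUnit_det _ _ hdetL
    _ = (Mid * Uu).rank := Matrix.rank_mul_eq_right_of_isUnit_det _ _ hdetDg
    _ = Mid.rank := Matrix.rank_mul_eq_left_of_isUnit_det _ _ hdetU
    _ = k + S.rank := rank_fromBlocks_one_zero_zero S

lemma exists_inj_linearIndependent {V ι : Type*} [AddCommGroup V] [Module ℝ V]
    [FiniteDimensional ℝ V] {k : ℕ} (W : ι → V)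
    (h : finrank ℝ (span ℝ (Set.range W)) = k) :
    ∃ r : Fin k → ι, Function.Injective r ∧ LinearIndependent ℝ (W ∘ r) := by
  classical
  obtain ⟨b, hbsub, hbspan, hbli⟩ := exists_linearIndependent ℝ (Set.range W)
  haveI : Fintype b := hbli.setFinite.fintype
  have hcard : Fintype.card b = k := by
    rw [← h, ← hbspan, finrank_span_set_eq_card hbli, Set.toFinset_card]
  let e : Fin k ≃ b := (Fintype.equivFinOfCardEq hcard).symm
  have hmem : ∀ i : Fin k, (e i : V) ∈ Set.range W := fun i => hbsub (e i).2
  let r : Fin k → ι := fun i => (hmem i).choose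
  have hr : ∀ i, W (r i) = (e i : V) := fun i => (hmem i).choose_spec
  refine ⟨r, ?_, ?_⟩
  · intro i i' hii
    apply e.injective
    apply Subtype.ext
    rw [← hr i, ← hr i', hii]
  · have : W ∘ r = (fun x : b => (x : V)) ∘ e := by
      funext i
      exact hr i
    rw [this]
    exact hbli.comp e e.injective

end RkAux

open Module Submodule Set Matrix

noncomputable section

set_option linter.unusedSectionVars false
namespace RkCfg

variable {N n k : ℕ} [NeZero N]

/-- difference matrix of a configuration -/
def Mx (x : Fin N → EuclideanSpace ℝ (Fin n)) : Matrix {j : Fin N // j ≠ 0} (Fin n) ℝ :=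
  Matrix.of fun j l => x j.1 l - x 0 l

variable (r : Fin k → {j : Fin N // j ≠ 0}) (c : Fin k → Fin n)

open Classical in
def σe (hr : Function.Injective r) :
    {j : Fin N // j ≠ 0} ≃ Fin k ⊕ {x : {j : Fin N // j ≠ 0} // x ∉ Set.range r} :=
  (Equiv.sumCompl (fun x => x ∈ Set.range r)).symm.trans
    (Equiv.sumCongr (Equiv.ofInjective r hr).symm (Equiv.refl _))

open Classical in
def τe (hc : Function.Injective c) :
    Fin n ≃ Fin k ⊕ {x : Fin n // x ∉ Set.range c} :=
  (Equiv.sumCompl (fun x => x ∈ Set.range c)).symm.trans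
    (Equiv.sumCongr (Equiv.ofInjective c hc).symm (Equiv.refl _))

lemma σe_symm_inl (hr : Function.Injective r) (a : Fin k) :
    (σe r hr).symm (Sum.inl a) = r a := by
  simp [σe]

lemma σe_symm_inr (hr : Function.Injective r) (i) :
    (σe r hr).symm (Sum.inr i) = i.1 := by
  simp [σe]

lemma τe_symm_inl (hc : Function.Injective c) (a : Fin k) :
    (τe c hc).symm (Sum.inl a) = c a := by
  simp [τe]

lemma τe_symm_inr (hc : Function.Injective c) (l) :
    (τe c hc).symm (Sum.inr l) = l.1 := by
  simp [τe]

variable (hr : Function.Injective r) (hc : Function.Injective c)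

def Yx (x : Fin N → EuclideanSpace ℝ (Fin n)) :
    Matrix (Fin k ⊕ {x : {j : Fin N // j ≠ 0} // x ∉ Set.range r})
      (Fin k ⊕ {x : Fin n // x ∉ Set.range c}) ℝ :=
  (Mx x).submatrix (σe r hr).symm (τe c hc).symm

def Ax (x : Fin N → EuclideanSpace ℝ (Fin n)) : Matrix (Fin k) (Fin k) ℝ :=
  (Yx r c hr hc x).toBlocks₁₁

def Bx (x : Fin N → EuclideanSpace ℝ (Fin n)) :
    Matrix (Fin k) {x : Fin n // x ∉ Set.range c} ℝ :=
  (Yx r c hr hc x).toBlocks₁₂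

def Cx (x : Fin N → EuclideanSpace ℝ (Fin n)) :
    Matrix {x : {j : Fin N // j ≠ 0} // x ∉ Set.range r} (Fin k) ℝ :=
  (Yx r c hr hc x).toBlocks₂₁

def Dx (x : Fin N → EuclideanSpace ℝ (Fin n)) :
    Matrix {x : {j : Fin N // j ≠ 0} // x ∉ Set.range r} {x : Fin n // x ∉ Set.range c} ℝ :=
  (Yx r c hr hc x).toBlocks₂₂

def CABx (x : Fin N → EuclideanSpace ℝ (Fin n)) :
    Matrix {x : {j : Fin N // j ≠ 0} // x ∉ Set.range r} {x : Fin n // x ∉ Set.range c} ℝ :=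
  Cx r c hr hc x * (Ax r c hr hc x)⁻¹ * Bx r c hr hc x

def Nmat (ε : ℝ) (x : Fin N → EuclideanSpace ℝ (Fin n)) :
    Matrix {j : Fin N // j ≠ 0} (Fin n) ℝ :=
  (Matrix.fromBlocks (Ax r c hr hc x) (Bx r c hr hc x) (Cx r c hr hc x)
    (Dx r c hr hc x + ε • CABx r c hr hc x)).submatrix (σe r hr) (τe c hc)

def fg (ε : ℝ) (x : Fin N → EuclideanSpace ℝ (Fin n)) : Fin N → EuclideanSpace ℝ (Fin n) :=
  fun j => x 0 + (if h : j = 0 then 0 else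
    (WithLp.equiv 2 (Fin n → ℝ)).symm fun l => Nmat r c hr hc ε x ⟨j, h⟩ l)

lemma fg_zero (ε : ℝ) (x : Fin N → EuclideanSpace ℝ (Fin n)) : fg r c hr hc ε x 0 = x 0 := by
  simp [fg]

lemma fg_apply_coord (ε : ℝ) (x : Fin N → EuclideanSpace ℝ (Fin n)) (j : Fin N) (h : j ≠ 0)
    (l : Fin n) : fg r c hr hc ε x j l = x 0 l + Nmat r c hr hc ε x ⟨j, h⟩ l := by
  simp only [fg, dif_neg h]
  rw [PiLp.add_apply, WithLp.equiv_symm_apply, PiLp.toLp_apply]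

lemma Mx_fg (ε : ℝ) (x : Fin N → EuclideanSpace ℝ (Fin n)) :
    Mx (fg r c hr hc ε x) = Nmat r c hr hc ε x := by
  ext j l
  show fg r c hr hc ε x j.1 l - fg r c hr hc ε x 0 l = _
  rw [fg_zero, fg_apply_coord r c hr hc ε x j.1 j.2]
  simp

lemma Yx_fg (ε : ℝ) (x : Fin N → EuclideanSpace ℝ (Fin n)) :
    Yx r c hr hc (fg r c hr hc ε x) =
      Matrix.fromBlocks (Ax r c hr hc x) (Bx r c hr hc x) (Cx r c hr hc x)
        (Dx r c hr hc x + ε • CABx r c hr hc x) := by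
  rw [Yx, Mx_fg, Nmat, Matrix.submatrix_submatrix, Equiv.self_comp_symm, Equiv.self_comp_symm,
    Matrix.submatrix_id_id]

lemma Ax_fg (ε : ℝ) (x) : Ax r c hr hc (fg r c hr hc ε x) = Ax r c hr hc x := by
  rw [Ax, Yx_fg]; exact Matrix.toBlocks_fromBlocks₁₁ _ _ _ _

lemma Bx_fg (ε : ℝ) (x) : Bx r c hr hc (fg r c hr hc ε x) = Bx r c hr hc x := by
  rw [Bx, Yx_fg]; exact Matrix.toBlocks_fromBlocks₁₂ _ _ _ _

lemma Cx_fg (ε : ℝ) (x) : Cx r c hr hc (fg r c hr hc ε x) = Cx r c hr hc x := by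
  rw [Cx, Yx_fg]; exact Matrix.toBlocks_fromBlocks₂₁ _ _ _ _

lemma Dx_fg (ε : ℝ) (x) : Dx r c hr hc (fg r c hr hc ε x) =
    Dx r c hr hc x + ε • CABx r c hr hc x := by
  rw [Dx, Yx_fg]; exact Matrix.toBlocks_fromBlocks₂₂ _ _ _ _

lemma CABx_fg (ε : ℝ) (x) : CABx r c hr hc (fg r c hr hc ε x) = CABx r c hr hc x := by
  rw [CABx, Ax_fg, Bx_fg, Cx_fg, CABx]

lemma Yx_submatrix (x : Fin N → EuclideanSpace ℝ (Fin n)) :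
    (Yx r c hr hc x).submatrix (σe r hr) (τe c hc) = Mx x := by
  rw [Yx, Matrix.submatrix_submatrix, Equiv.symm_comp_self, Equiv.symm_comp_self,
    Matrix.submatrix_id_id]

lemma fg_fg (ε : ℝ) (x : Fin N → EuclideanSpace ℝ (Fin n)) :
    fg r c hr hc (-ε) (fg r c hr hc ε x) = x := by
  funext j
  rcases eq_or_ne j 0 with rfl | hj
  · rw [fg_zero, fg_zero]
  · ext l
    rw [fg_apply_coord r c hr hc (-ε) _ j hj, fg_zero]
    have hN : Nmat r c hr hc (-ε) (fg r c hr hc ε x) = Mx x := by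
      rw [Nmat, Ax_fg, Bx_fg, Cx_fg, Dx_fg, CABx_fg]
      have : Dx r c hr hc x + ε • CABx r c hr hc x + (-ε) • CABx r c hr hc x =
          Dx r c hr hc x := by
        rw [add_assoc, ← add_smul]
        simp
      have h4 : Matrix.fromBlocks (Ax r c hr hc x) (Bx r c hr hc x) (Cx r c hr hc x)
          (Dx r c hr hc x) = Yx r c hr hc x := Matrix.fromBlocks_toBlocks _
      rw [this, h4, Yx_submatrix]
    rw [hN]
    show x 0 l + (x j l - x 0 l) = x j l
    ring

lemma contDiff_eval (j : Fin N) (l : Fin n) :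
    ContDiff ℝ (⊤ : ℕ∞) fun x : Fin N → EuclideanSpace ℝ (Fin n) => x j l := by
  have h := ContDiff.comp (n := ((⊤ : ℕ∞) : WithTop ℕ∞))
    ((EuclideanSpace.proj (𝕜 := ℝ) l).contDiff)
    (contDiff_apply (n := ((⊤ : ℕ∞) : WithTop ℕ∞)) ℝ (EuclideanSpace ℝ (Fin n)) j)
  simpa [Function.comp_def] using h

lemma contDiff_Mx_entry (j : {j : Fin N // j ≠ 0}) (l : Fin n) :
    ContDiff ℝ (⊤ : ℕ∞) fun x : Fin N → EuclideanSpace ℝ (Fin n) => Mx x j l :=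
  (contDiff_eval j.1 l).sub (contDiff_eval 0 l)

lemma contDiff_Yx_entry (s t) :
    ContDiff ℝ (⊤ : ℕ∞) fun x : Fin N → EuclideanSpace ℝ (Fin n) => Yx r c hr hc x s t :=
  contDiff_Mx_entry _ _

def Uset : Set (Fin N → EuclideanSpace ℝ (Fin n)) := {x | IsUnit (Ax r c hr hc x).det}

lemma contDiff_det_Ax : ContDiff ℝ (⊤ : ℕ∞) fun x : Fin N → EuclideanSpace ℝ (Fin n) =>
    (Ax r c hr hc x).det := by
  rw [← contDiffOn_univ]
  exact RkAux.contDiffOn_det fun i j =>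
    (contDiff_Yx_entry r c hr hc (Sum.inl i) (Sum.inl j)).contDiffOn

lemma isOpen_Uset : IsOpen (Uset r c hr hc) := by
  have h : Uset r c hr hc = (fun x => (Ax r c hr hc x).det) ⁻¹' {(0:ℝ)}ᶜ := by
    ext x
    simp [Uset, isUnit_iff_ne_zero]
  rw [h]
  exact isOpen_compl_singleton.preimage (contDiff_det_Ax r c hr hc).continuous

lemma contDiffOn_inv_Ax (a b : Fin k) :
    ContDiffOn ℝ (⊤ : ℕ∞) (fun x => (Ax r c hr hc x)⁻¹ a b) (Uset r c hr hc) := by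
  have heq : ∀ x ∈ Uset r c hr hc,
      ((Ax r c hr hc x).det)⁻¹ * (Ax r c hr hc x).adjugate a b = (Ax r c hr hc x)⁻¹ a b := by
    intro x hx
    rw [Matrix.inv_def, Matrix.smul_apply, Ring.inverse_eq_inv, smul_eq_mul]
  refine ContDiffOn.congr ?_ fun x hx => (heq x hx).symm
  refine ContDiffOn.mul ?_ ?_
  · exact ((contDiff_det_Ax r c hr hc).contDiffOn).inv fun x hx => (isUnit_iff_ne_zero.mp hx)
  · exact RkAux.contDiffOn_adjugate (fun i j =>
      (contDiff_Yx_entry r c hr hc (Sum.inl i) (Sum.inl j)).contDiffOn) a b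

lemma contDiffOn_CABx (i l) :
    ContDiffOn ℝ (⊤ : ℕ∞) (fun x => CABx r c hr hc x i l) (Uset r c hr hc) := by
  have heq : (fun x => CABx r c hr hc x i l) =
      fun x => ∑ b : Fin k, (∑ a : Fin k, Cx r c hr hc x i a * (Ax r c hr hc x)⁻¹ a b) *
        Bx r c hr hc x b l := by
    funext x
    simp only [CABx, Matrix.mul_apply]
  rw [heq]
  refine ContDiffOn.sum fun b _ => ContDiffOn.mul (ContDiffOn.sum fun a _ => ?_) ?_
  · exact ((contDiff_Yx_entry r c hr hc (Sum.inr i) (Sum.inl a)).contDiffOn).mul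
      (contDiffOn_inv_Ax r c hr hc a b)
  · exact (contDiff_Yx_entry r c hr hc (Sum.inl b) (Sum.inr l)).contDiffOn

lemma contDiffOn_fg (ε : ℝ) : ContDiffOn ℝ (⊤ : ℕ∞) (fg r c hr hc ε) (Uset r c hr hc) := by
  rw [contDiffOn_pi]
  intro j
  refine (ContinuousLinearEquiv.comp_contDiffOn_iff
    (PiLp.continuousLinearEquiv 2 ℝ (fun _ : Fin n => ℝ))).mp ?_
  rw [contDiffOn_pi]
  intro l
  simp only [Function.comp_apply]
  rcases eq_or_ne j 0 with rfl | hj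
  · have heq : (fun x : Fin N → EuclideanSpace ℝ (Fin n) =>
        (PiLp.continuousLinearEquiv 2 ℝ (fun _ : Fin n => ℝ)) (fg r c hr hc ε x 0) l) =
        fun x => x 0 l := by
      funext x
      rw [show (PiLp.continuousLinearEquiv 2 ℝ (fun _ : Fin n => ℝ))
        (fg r c hr hc ε x 0) l = fg r c hr hc ε x 0 l from rfl, fg_zero]
    rw [heq]
    exact (contDiff_eval 0 l).contDiffOn
  · have heq : (fun x : Fin N → EuclideanSpace ℝ (Fin n) =>
        (PiLp.continuousLinearEquiv 2 ℝ (fun _ : Fin n => ℝ)) (fg r c hr hc ε x j) l) =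
        fun x => x 0 l + Nmat r c hr hc ε x ⟨j, hj⟩ l := by
      funext x
      exact fg_apply_coord r c hr hc ε x j hj l
    rw [heq]
    have hbase : ContDiffOn ℝ (⊤ : ℕ∞) (fun x : Fin N → EuclideanSpace ℝ (Fin n) => x 0 l)
        (Uset r c hr hc) :=
      (contDiff_eval 0 l).contDiffOn
    refine hbase.add ?_
    have hgen : ∀ s t, ContDiffOn ℝ (⊤ : ℕ∞)
        (fun x => Matrix.fromBlocks (Ax r c hr hc x) (Bx r c hr hc x) (Cx r c hr hc x)
          (Dx r c hr hc x + ε • CABx r c hr hc x) s t) (Uset r c hr hc) := by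
      rintro (a | i) (b | t)
      · exact (contDiff_Yx_entry r c hr hc (Sum.inl a) (Sum.inl b)).contDiffOn
      · exact (contDiff_Yx_entry r c hr hc (Sum.inl a) (Sum.inr t)).contDiffOn
      · exact (contDiff_Yx_entry r c hr hc (Sum.inr i) (Sum.inl b)).contDiffOn
      · have heq2 : (fun x => Matrix.fromBlocks (Ax r c hr hc x) (Bx r c hr hc x)
            (Cx r c hr hc x) (Dx r c hr hc x + ε • CABx r c hr hc x) (Sum.inr i) (Sum.inr t)) =
            fun x => Yx r c hr hc x (Sum.inr i) (Sum.inr t) + ε * CABx r c hr hc x i t := by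
          funext x
          simp [Matrix.fromBlocks_apply₂₂, Matrix.add_apply, Matrix.smul_apply, smul_eq_mul]
          rfl
        rw [heq2]
        exact ((contDiff_Yx_entry r c hr hc (Sum.inr i) (Sum.inr t)).contDiffOn).add
          (contDiffOn_const.mul (contDiffOn_CABx r c hr hc i t))
    exact hgen (σe r hr ⟨j, hj⟩) (τe c hc l)

lemma finrank_vectorSpan_eq_rank (x : Fin N → EuclideanSpace ℝ (Fin n)) :
    finrank ℝ (vectorSpan ℝ (Set.range x)) = (Mx x).rank := by
  rw [vectorSpan_range_eq_span_range_vsub_right_ne ℝ x 0, Matrix.rank_eq_finrank_span_row]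
  have h : Set.range (Mx x).row =
      ⇑(WithLp.linearEquiv 2 ℝ (Fin n → ℝ)) ''
        Set.range (fun i : {j : Fin N // j ≠ 0} => x i.1 -ᵥ x 0) := by
    rw [← Set.range_comp]
    rfl
  rw [h, ← LinearEquiv.coe_coe, ← Submodule.map_span, LinearEquiv.finrank_map_eq]

lemma fg_mem_U (ε : ℝ) (x) (hx : x ∈ Uset r c hr hc) :
    fg r c hr hc ε x ∈ Uset r c hr hc := by
  show IsUnit (Ax r c hr hc (fg r c hr hc ε x)).det
  rw [Ax_fg]
  exact hx

lemma rank_eq_on_U (x) (hx : x ∈ Uset r c hr hc) :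
    (Mx x).rank = k + (Dx r c hr hc x - CABx r c hr hc x).rank := by
  have h1 : (Mx x).rank = (Yx r c hr hc x).rank := by
    rw [← Yx_submatrix r c hr hc x, RkAux.rank_submatrix']
  rw [h1, ← Matrix.fromBlocks_toBlocks (Yx r c hr hc x)]
  exact RkAux.rank_fromBlocks_of_isUnit _ _ _ _ hx

def Tmap : (Fin N → EuclideanSpace ℝ (Fin n)) →ₗ[ℝ]
    ({x : {j : Fin N // j ≠ 0} // x ∉ Set.range r} → {x : Fin n // x ∉ Set.range c} → ℝ) where
  toFun y := fun i l => y i.1.1 l.1 - y 0 l.1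
  map_add' y z := by
    funext i l
    simp only [Pi.add_apply, PiLp.add_apply]
    ring
  map_smul' a y := by
    funext i l
    simp only [Pi.smul_apply, PiLp.smul_apply, RingHom.id_apply, smul_eq_mul]
    ring

lemma Tmap_eq_Dx (y) (i) (l) : Tmap r c y i l = Dx r c hr hc y i l := by
  have h1 : Dx r c hr hc y i l =
      Mx y ((σe r hr).symm (Sum.inr i)) ((τe c hc).symm (Sum.inr l)) := rfl
  rw [h1, σe_symm_inr, τe_symm_inr]
  rfl

lemma Tmap_surjective : Function.Surjective (Tmap (N := N) (n := n) r c) := by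
  classical
  intro t
  have h0 : ¬ ∃ i' : {x : {j : Fin N // j ≠ 0} // x ∉ Set.range r}, i'.1.1 = (0 : Fin N) := by
    rintro ⟨i', hi'⟩
    exact i'.1.2 hi'
  set y : Fin N → EuclideanSpace ℝ (Fin n) := fun j =>
    if h : ∃ i : {x : {j : Fin N // j ≠ 0} // x ∉ Set.range r}, i.1.1 = j then
      (WithLp.equiv 2 (Fin n → ℝ)).symm (fun l' =>
        if h2 : ∃ m : {x : Fin n // x ∉ Set.range c}, m.1 = l' then t h.choose h2.choose else 0)
    else 0 with hy
  refine ⟨y, ?_⟩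
  funext i l
  have hex : ∃ i' : {x : {j : Fin N // j ≠ 0} // x ∉ Set.range r}, i'.1.1 = i.1.1 := ⟨i, rfl⟩
  have hex2 : ∃ m : {x : Fin n // x ∉ Set.range c}, m.1 = l.1 := ⟨l, rfl⟩
  have hy0 : y 0 = 0 := by
    rw [hy]
    exact dif_neg h0
  have hyi : y i.1.1 = (WithLp.equiv 2 (Fin n → ℝ)).symm (fun l' =>
      if h2 : ∃ m : {x : Fin n // x ∉ Set.range c}, m.1 = l' then t hex.choose h2.choose
      else 0) := by
    rw [hy]
    exact dif_pos hex
  have hc1 : hex.choose = i := by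
    apply Subtype.ext
    apply Subtype.ext
    exact hex.choose_spec
  have hc2 : hex2.choose = l := Subtype.ext hex2.choose_spec
  have hT : Tmap (N := N) (n := n) r c y i l = y i.1.1 l.1 - y 0 l.1 := rfl
  rw [hT, hy0, hyi, WithLp.equiv_symm_apply, PiLp.toLp_apply, dif_pos hex2, hc1, hc2]
  simp

end RkCfg


theorem rank_k_stratum_is_submanifold {N n k : ℕ} (hn : 1 ≤ n) (hN : n < N) (hk : k ≤ n)
    (p : Fin N → EuclideanSpace ℝ (Fin n))
    (hp : Module.finrank ℝ (vectorSpan ℝ (Set.range p)) = k) :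
    ∃ (U V : Set (Fin N → EuclideanSpace ℝ (Fin n)))
      (f g : (Fin N → EuclideanSpace ℝ (Fin n)) → (Fin N → EuclideanSpace ℝ (Fin n)))
      (L : Submodule ℝ (Fin N → EuclideanSpace ℝ (Fin n))),
      IsOpen U ∧ IsOpen V ∧ p ∈ U ∧
      f '' U = V ∧
      ContDiffOn ℝ (⊤ : ℕ∞) f U ∧ ContDiffOn ℝ (⊤ : ℕ∞) g V ∧
      (∀ y ∈ U, g (f y) = y) ∧ (∀ y ∈ V, f (g y) = y) ∧
      Module.finrank ℝ L = k * (N + n - 1) + n - k ^ 2 ∧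
      f '' (U ∩ {x | Module.finrank ℝ (vectorSpan ℝ (Set.range x)) = k}) =
        V ∩ (L : Set (Fin N → EuclideanSpace ℝ (Fin n))) := by
  classical
  haveI : NeZero N := ⟨by omega⟩
  have hMp : (RkCfg.Mx p).rank = k := by
    rw [← RkCfg.finrank_vectorSpan_eq_rank]
    exact hp
  have hspan : finrank ℝ (span ℝ (Set.range (RkCfg.Mx p))) = k := by
    rw [Matrix.rank_eq_finrank_span_row] at hMp
    exact hMp
  obtain ⟨r, hrinj, hrli⟩ := RkAux.exists_inj_linearIndependent (RkCfg.Mx p) hspan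
  set S : Matrix (Fin k) (Fin n) ℝ := Matrix.of (RkCfg.Mx p ∘ r) with hS
  have hSrank : S.rank = k := by
    have h := LinearIndependent.rank_matrix (M := S) hrli
    simpa using h
  have hspanT : finrank ℝ (span ℝ (Set.range Sᵀ)) = k := by
    rw [← Matrix.rank_transpose, Matrix.rank_eq_finrank_span_row] at hSrank
    exact hSrank
  obtain ⟨c, hcinj, hcli⟩ := RkAux.exists_inj_linearIndependent Sᵀ hspanT
  have hQ : IsUnit (Matrix.of (Sᵀ ∘ c)) := Matrix.linearIndependent_rows_iff_isUnit.mp hcli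
  have hAp : RkCfg.Ax r c hrinj hcinj p = (Matrix.of (Sᵀ ∘ c))ᵀ := by
    ext a b
    show RkCfg.Mx p ((RkCfg.σe r hrinj).symm (Sum.inl a)) ((RkCfg.τe c hcinj).symm (Sum.inl b)) =
      _
    rw [RkCfg.σe_symm_inl, RkCfg.τe_symm_inl]
    rfl
  have hpU : p ∈ RkCfg.Uset r c hrinj hcinj := by
    show IsUnit (RkCfg.Ax r c hrinj hcinj p).det
    rw [hAp, Matrix.det_transpose]
    exact (Matrix.isUnit_iff_isUnit_det _).mp hQ
  have hDxL : ∀ y, y ∈ LinearMap.ker (RkCfg.Tmap (N := N) (n := n) r c) ↔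
      RkCfg.Dx r c hrinj hcinj y = 0 := by
    intro y
    rw [LinearMap.mem_ker]
    constructor
    · intro h
      ext i l
      rw [← RkCfg.Tmap_eq_Dx r c hrinj hcinj y i l, h]
      rfl
    · intro h
      funext i l
      rw [RkCfg.Tmap_eq_Dx r c hrinj hcinj y i l, h]
      rfl

  refine ⟨RkCfg.Uset r c hrinj hcinj, RkCfg.Uset r c hrinj hcinj,
    RkCfg.fg r c hrinj hcinj (-1), RkCfg.fg r c hrinj hcinj 1,
    LinearMap.ker (RkCfg.Tmap (N := N) (n := n) r c),
    RkCfg.isOpen_Uset r c hrinj hcinj, RkCfg.isOpen_Uset r c hrinj hcinj, hpU, ?_,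
    RkCfg.contDiffOn_fg r c hrinj hcinj (-1), RkCfg.contDiffOn_fg r c hrinj hcinj 1,
    ?_, ?_, ?_, ?_⟩
  · -- f '' U = U
    ext y
    constructor
    · rintro ⟨x, hx, rfl⟩
      exact RkCfg.fg_mem_U r c hrinj hcinj (-1) x hx
    · intro hy
      refine ⟨RkCfg.fg r c hrinj hcinj 1 y, RkCfg.fg_mem_U r c hrinj hcinj 1 y hy, ?_⟩
      exact RkCfg.fg_fg r c hrinj hcinj 1 y
  · -- g ∘ f = id on U
    intro y _
    have h := RkCfg.fg_fg r c hrinj hcinj (-1) y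
    norm_num at h
    exact h
  · -- f ∘ g = id on U
    intro y _
    exact RkCfg.fg_fg r c hrinj hcinj 1 y
  · -- finrank L
    have hsurj := RkCfg.Tmap_surjective (N := N) (n := n) r c
    have hrn := LinearMap.finrank_range_add_finrank_ker (RkCfg.Tmap (N := N) (n := n) r c)
    rw [LinearMap.range_eq_top.mpr hsurj, finrank_top] at hrn
    have hcardρ : Nat.card {j : Fin N // j ≠ 0} = N - 1 := by
      have h1 := Fintype.card_subtype_compl (fun j : Fin N => j = 0)
      rw [Fintype.card_subtype_eq (0 : Fin N), Fintype.card_fin] at h1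
      simp only [← Nat.card_eq_fintype_card] at h1
      exact h1
    have hcardRC : Nat.card {x : {j : Fin N // j ≠ 0} // x ∉ Set.range r} = (N - 1) - k := by
      have h1 := Fintype.card_subtype_compl (fun x : {j : Fin N // j ≠ 0} => x ∈ Set.range r)
      simp only [← Nat.card_eq_fintype_card] at h1
      have h2 : Nat.card {x : {j : Fin N // j ≠ 0} // x ∈ Set.range r} = k := by
        have h3 := Nat.card_range_of_injective hrinj
        simp only [Nat.card_eq_fintype_card, Fintype.card_fin] at h3
        simp only [← Nat.card_eq_fintype_card] at h3
        exact h3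
      rw [h2, hcardρ] at h1
      exact h1
    have hcardCC : Nat.card {x : Fin n // x ∉ Set.range c} = n - k := by
      have h1 := Fintype.card_subtype_compl (fun x : Fin n => x ∈ Set.range c)
      simp only [← Nat.card_eq_fintype_card] at h1
      have h2 : Nat.card {x : Fin n // x ∈ Set.range c} = k := by
        have h3 := Nat.card_range_of_injective hcinj
        simp only [Nat.card_eq_fintype_card, Fintype.card_fin] at h3
        simp only [← Nat.card_eq_fintype_card] at h3
        exact h3
      rw [h2] at h1
      simpa [Nat.card_eq_fintype_card] using h1
    have hcod : finrank ℝ ({x : {j : Fin N // j ≠ 0} // x ∉ Set.range r} →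
        {x : Fin n // x ∉ Set.range c} → ℝ) = ((N - 1) - k) * (n - k) := by
      rw [Module.finrank_pi_fintype]
      simp only [Module.finrank_pi, Finset.sum_const, Finset.card_univ, smul_eq_mul]
      rw [← Nat.card_eq_fintype_card, ← Nat.card_eq_fintype_card, hcardRC, hcardCC]
    have hdom : finrank ℝ (Fin N → EuclideanSpace ℝ (Fin n)) = N * n := by
      rw [Module.finrank_pi_fintype]
      simp [finrank_euclideanSpace_fin, Finset.sum_const]
    rw [hcod, hdom] at hrn
    have hfinL : finrank ℝ (LinearMap.ker (RkCfg.Tmap (N := N) (n := n) r c)) =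
        N * n - ((N - 1) - k) * (n - k) := by omega
    rw [hfinL]
    have e2 : ((N - 1) - k) * (n - k) ≤ N * n := Nat.mul_le_mul (by omega) (by omega)
    have e3 : k ^ 2 ≤ k * (N + n - 1) + n := by
      calc k ^ 2 = k * k := sq k
        _ ≤ k * (N + n - 1) := Nat.mul_le_mul_left k (by omega)
        _ ≤ k * (N + n - 1) + n := Nat.le_add_right _ _
    zify [hk, e2, e3, (by omega : k ≤ N - 1), (by omega : 1 ≤ N), (by omega : 1 ≤ N + n)]
    ring
  · -- image of stratum
    ext y
    constructor
    · rintro ⟨x, ⟨hxU, hxP⟩, rfl⟩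
      refine ⟨RkCfg.fg_mem_U r c hrinj hcinj (-1) x hxU, ?_⟩
      have hxk : (RkCfg.Mx x).rank = k := by
        rw [← RkCfg.finrank_vectorSpan_eq_rank]
        exact hxP
      have hrank := RkCfg.rank_eq_on_U r c hrinj hcinj x hxU
      rw [hxk] at hrank
      have hS0 : RkCfg.Dx r c hrinj hcinj x - RkCfg.CABx r c hrinj hcinj x = 0 :=
        (RkAux.rank_eq_zero_iff' _).mp (by omega)
      show RkCfg.fg r c hrinj hcinj (-1) x ∈ LinearMap.ker (RkCfg.Tmap (N := N) (n := n) r c)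
      rw [hDxL, RkCfg.Dx_fg]
      rw [← hS0]
      simp [sub_eq_add_neg]
    · rintro ⟨hyU, hyL⟩
      refine ⟨RkCfg.fg r c hrinj hcinj 1 y,
        ⟨RkCfg.fg_mem_U r c hrinj hcinj 1 y hyU, ?_⟩,
        RkCfg.fg_fg r c hrinj hcinj 1 y⟩
      show finrank ℝ (vectorSpan ℝ (Set.range (RkCfg.fg r c hrinj hcinj 1 y))) = k
      rw [RkCfg.finrank_vectorSpan_eq_rank,
        RkCfg.rank_eq_on_U r c hrinj hcinj _ (RkCfg.fg_mem_U r c hrinj hcinj 1 y hyU)]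
      have hDy : RkCfg.Dx r c hrinj hcinj y = 0 := (hDxL y).mp hyL
      have h0 : RkCfg.Dx r c hrinj hcinj (RkCfg.fg r c hrinj hcinj 1 y) -
          RkCfg.CABx r c hrinj hcinj (RkCfg.fg r c hrinj hcinj 1 y) = 0 := by
        rw [RkCfg.Dx_fg, RkCfg.CABx_fg, hDy]
        simp
      rw [h0, Matrix.rank_zero]
      omega
end
end
end

section
/- Let n ≥ 1 and consider configurations of n + 1 points in ℝ^n. Let Pⁿ := {x : Fin (n+1) → EuclideanSpace ℝ (Fin n) | affineSpan ℝ (Set.range x) = ⊤}, and for x ∈ Pⁿ let A_x : Matrix (Fin n) (Fin n) ℝ be the matrix whose j-th column is x (j+1) - x 0. Define Q₊ := {x ∈ Pⁿ | det A_x > 0} and Q₋ := {x ∈ Pⁿ | det A_x < 0}. Then Q₊ and Q₋ are nonempty, open, disjoint, path-connected, their union is Pⁿ, and they are exactly the connected components of Pⁿ (every connected subset of Pⁿ is contained in Q₊ or in Q₋). In particular, Pⁿ has exactly two connected components. -/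
/-- The matrix whose `j`-th column is `x (j+1) - x 0`. -/
noncomputable def diffMatrix {n : ℕ} (x : Fin (n + 1) → EuclideanSpace ℝ (Fin n)) :
    Matrix (Fin n) (Fin n) ℝ :=
  Matrix.of fun i j => x j.succ i - x 0 i

/-- The set of non-degenerate configurations of `n+1` points in `ℝ^n`. -/
def Pn (n : ℕ) : Set (Fin (n + 1) → EuclideanSpace ℝ (Fin n)) :=
  {x | affineSpan ℝ (Set.range x) = ⊤}

/-- Non-degenerate configurations with positive orientation. -/
noncomputable def Qpos (n : ℕ) : Set (Fin (n + 1) → EuclideanSpace ℝ (Fin n)) :=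
  {x ∈ Pn n | 0 < (diffMatrix x).det}

/-- Non-degenerate configurations with negative orientation. -/
noncomputable def Qneg (n : ℕ) : Set (Fin (n + 1) → EuclideanSpace ℝ (Fin n)) :=
  {x ∈ Pn n | (diffMatrix x).det < 0}

/-!
A configuration `x` is determined by its base point `x 0` and its difference matrix, and
`affineSpan ℝ (range x) = ⊤` exactly when the vectors `x (j+1) - x 0` span, i.e. when that matrix
is invertible. So `Qpos n` and `Qneg n` are the preimages of `{det > 0}` and `{det < 0}` under
`diffMatrix`, a continuous map with a continuous section; everything except path-connectedness
follows from the continuity of the determinant.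

The substance is that `{det > 0}` is path-connected; `{det < 0}` is a left translate of it. Every
matrix is a product of transvections and of a diagonal matrix with the same determinant, and the
matrices joined to `1` inside `{det > 0}` are closed under products. A transvection is joined to `1`
by scaling its off-diagonal entry, a positive diagonal matrix by a segment, and the negative entries
of a diagonal matrix of positive determinant come in pairs, which are removed one pair at a time:
the sign change of coordinates `i` and `j` is the square of the quarter turn
`transvection i j 1 * transvection j i (-1) * transvection i j 1` of the `(i, j)`-plane.
-/

open Matrix Set Finset

theorem exists_ne_neg_of_prod_pos {ι R : Type*} [Fintype ι] [DecidableEq ι] [CommRing R]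
    [LinearOrder R] [IsStrictOrderedRing R] {d : ι → R} (hd : 0 < ∏ a, d a) {i : ι}
    (hi : d i < 0) : ∃ j ≠ i, d j < 0 := by
  by_contra! h
  have hrest : 0 ≤ ∏ a ∈ univ.erase i, d a := prod_nonneg fun a ha => h a (ne_of_mem_erase ha)
  rw [← mul_prod_erase univ d (mem_univ i)] at hd
  exact hd.not_ge (mul_nonpos_of_nonpos_of_nonneg hi.le hrest)

theorem Submonoid.joinedIn_one_mul {M : Type*} [Monoid M] [TopologicalSpace M]
    [ContinuousMul M] {S : Submonoid M} {a b : M} (ha : JoinedIn S 1 a) (hb : JoinedIn S 1 b) :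
    JoinedIn S 1 (a * b) := by
  simpa [Submonoid.coe_mul_self_eq] using ha.mul hb

namespace Matrix

variable {ι : Type*} [Fintype ι] [DecidableEq ι]

variable (ι) in
def posDetSubmonoid : Submonoid (Matrix ι ι ℝ) where
  carrier := {M | 0 < M.det}
  mul_mem' {A B} hA hB := by simpa [det_mul] using mul_pos hA hB
  one_mem' := by simp

theorem mem_posDetSubmonoid {M : Matrix ι ι ℝ} : M ∈ posDetSubmonoid ι ↔ 0 < M.det :=
  Iff.rfl

theorem joinedIn_posDet_one_transvection {i j : ι} (hij : i ≠ j) (c : ℝ) :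
    JoinedIn (posDetSubmonoid ι) 1 (transvection i j c) := by
  refine JoinedIn.ofLine (f := fun s => transvection i j (s * c)) ?_ (by simp) (by simp) ?_
  · simp_rw [transvection, ← smul_eq_mul, ← smul_single]
    fun_prop
  · rintro _ ⟨s, -, rfl⟩
    simp [mem_posDetSubmonoid, det_transvection_of_ne _ _ hij]

theorem joinedIn_posDet_one_diagonal_of_pos {d : ι → ℝ} (hd : ∀ i, 0 < d i) :
    JoinedIn (posDetSubmonoid ι) 1 (diagonal d) := by
  refine JoinedIn.ofLine (f := fun s => diagonal fun i => 1 - s + s * d i) (by fun_prop)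
    (by simp) (by simp) ?_
  rintro _ ⟨s, ⟨hs₀, hs₁⟩, rfl⟩
  rw [SetLike.mem_coe, mem_posDetSubmonoid, det_diagonal]
  refine Finset.prod_pos fun i _ => ?_
  simpa using convex_Ioi (0 : ℝ) one_pos (hd i) (sub_nonneg.2 hs₁) hs₀ (by ring)

theorem transvection_rotation_sq {i j : ι} (hij : i ≠ j) :
    (transvection i j (1 : ℝ) * transvection j i (-1) * transvection i j 1) ^ 2 =
      diagonal (Pi.mulSingle i (-1) * Pi.mulSingle j (-1)) := by
  ext a b
  simp only [sq, Matrix.mul_assoc]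
  obtain rfl | hai := eq_or_ne a i
  · simp [transvection_mul_apply_same, transvection_mul_apply_of_ne, hij, hij.symm,
      diagonal_apply]
    simp [transvection, single_apply, one_apply, hij]
    split_ifs <;> simp
  obtain rfl | haj := eq_or_ne a j
  · simp [transvection_mul_apply_same, transvection_mul_apply_of_ne, hij, hij.symm,
      diagonal_apply]
    simp [transvection, single_apply, one_apply, hij]
    split_ifs <;> simp
  · simp [transvection_mul_apply_of_ne, hai, haj, diagonal_apply]
    simp [transvection, one_apply, hai.symm]

theorem joinedIn_posDet_one_diagonal_neg_pair {i j : ι} (hij : i ≠ j) :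
    JoinedIn (posDetSubmonoid ι) 1
      (diagonal (Pi.mulSingle i (-1) * Pi.mulSingle j (-1) : ι → ℝ)) := by
  have hij₁ := joinedIn_posDet_one_transvection hij 1
  have hji₁ := joinedIn_posDet_one_transvection hij.symm (-1)
  have hR := Submonoid.joinedIn_one_mul (Submonoid.joinedIn_one_mul hij₁ hji₁) hij₁
  rw [← transvection_rotation_sq hij, sq]
  exact Submonoid.joinedIn_one_mul hR hR

theorem joinedIn_posDet_one_diagonal {d : ι → ℝ} (hd : 0 < ∏ a, d a) :
    JoinedIn (posDetSubmonoid ι) 1 (diagonal d) := by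
  induction hk : #{a | d a < 0} using Nat.strong_induction_on generalizing d with
  | _ k ih =>
  by_cases hneg : ∃ i, d i < 0
  · obtain ⟨i, hi⟩ := hneg
    obtain ⟨j, hji, hj⟩ := exists_ne_neg_of_prod_pos hd hi
    set φ : ι → ℝ := Pi.mulSingle i (-1) * Pi.mulSingle j (-1)
    have hφ : ∀ a, φ a = if a = i ∨ a = j then -1 else 1 := by
      intro a
      by_cases hai : a = i <;> by_cases haj : a = j <;> simp_all [φ]
    have hφφ : φ * φ = 1 := by
      ext a; rw [Pi.mul_apply, hφ]; split_ifs <;> norm_num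
    have hprod : 0 < ∏ a, (φ * d) a := by
      simpa only [φ, Pi.mul_apply, prod_mul_distrib, Fintype.prod_pi_mulSingle', neg_one_mul,
        neg_neg, one_mul] using hd
    have hfewer : #{a | (φ * d) a < 0} < k := by
      rw [← hk]
      refine card_lt_card ((Finset.ssubset_iff_of_subset fun a ha => ?_).2 ⟨i, ?_, ?_⟩)
      · simp only [mem_filter, Pi.mul_apply, hφ] at ha ⊢
        split_ifs at ha with hij
        · rcases hij with rfl | rfl <;> linarith
        · simpa using ha
      · simpa using hi
      · simpa [hφ] using hi.le
    have hdecomp : diagonal d = diagonal φ * diagonal (φ * d) := by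
      rw [diagonal_mul_diagonal, ← Pi.mul_def, ← mul_assoc, hφφ, one_mul]
    rw [hdecomp]
    exact Submonoid.joinedIn_one_mul (joinedIn_posDet_one_diagonal_neg_pair hji.symm)
      (ih _ hfewer hprod rfl)
  · push Not at hneg
    refine joinedIn_posDet_one_diagonal_of_pos fun a => (hneg a).lt_of_ne' ?_
    exact fun h => hd.ne' (prod_eq_zero (mem_univ a) h)

theorem joinedIn_posDet_one {M : Matrix ι ι ℝ} (hM : 0 < M.det) :
    JoinedIn (posDetSubmonoid ι) 1 M := by
  refine diagonal_transvection_induction (fun N => JoinedIn (posDetSubmonoid ι) 1 N) M ?_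
    (fun t => joinedIn_posDet_one_transvection t.hij t.c) fun _ _ => Submonoid.joinedIn_one_mul
  intro D hD
  exact joinedIn_posDet_one_diagonal (by rwa [← det_diagonal, hD])

theorem isPathConnected_posDet : IsPathConnected (posDetSubmonoid ι : Set (Matrix ι ι ℝ)) :=
  ⟨1, one_mem _, fun _ hM => joinedIn_posDet_one hM⟩

theorem isPathConnected_setOf_det_neg [Nonempty ι] :
    IsPathConnected {M : Matrix ι ι ℝ | M.det < 0} := by
  obtain ⟨i⟩ := ‹Nonempty ι›
  set F : Matrix ι ι ℝ := diagonal (Pi.mulSingle i (-1))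
  have hFF : Function.Involutive (F * ·) := fun M => by
    dsimp only
    rw [← Matrix.mul_assoc, diagonal_mul_diagonal, ← Pi.mul_def, ← Pi.mulSingle_mul]
    simp
  have hF : F.det = -1 := by simp [F, det_diagonal]
  have himage : {M : Matrix ι ι ℝ | M.det < 0} = (F * ·) '' posDetSubmonoid ι := by
    ext M
    simp [hFF.image_eq_preimage_symm, mem_posDetSubmonoid, det_mul, hF]
  rw [himage]
  exact isPathConnected_posDet.image (continuous_const.mul continuous_id)

end Matrix

theorem affineSpan_range_eq_top_iff_span_vsub {k V P : Type*} [Ring k] [AddCommGroup V]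
    [Module k V] [AddTorsor V P] {n : ℕ} (x : Fin (n + 1) → P) :
    affineSpan k (range x) = ⊤ ↔
      Submodule.span k (range fun j : Fin n => x j.succ -ᵥ x 0) = ⊤ := by
  rw [AffineSubspace.affineSpan_eq_top_iff_vectorSpan_eq_top_of_nonempty k V P
    (range_nonempty x), vectorSpan_range_eq_span_range_vsub_right k x 0, Fin.range_fin_succ,
    vsub_self, Submodule.span_insert_zero]
  rfl

theorem Module.Basis.span_range_eq_top_iff_det_ne_zero {ι K M : Type*} [Fintype ι]
    [DecidableEq ι] [Field K] [AddCommGroup M] [Module K M] (b : Module.Basis ι K M) (v : ι → M) :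
    Submodule.span K (range v) = ⊤ ↔ b.det v ≠ 0 := by
  rw [← isUnit_iff_ne_zero, ← b.is_basis_iff_det]
  refine ⟨fun h => ⟨linearIndependent_of_top_le_span_of_card_eq_finrank h.ge ?_, h⟩, And.right⟩
  have := b.finiteDimensional_of_finite
  simp [Module.finrank_eq_card_basis b]

section Configurations

variable {n : ℕ}

theorem mem_Pn_iff_det_ne_zero {x : Fin (n + 1) → EuclideanSpace ℝ (Fin n)} :
    x ∈ Pn n ↔ (diffMatrix x).det ≠ 0 := by
  have hbasis : diffMatrix x =
      (EuclideanSpace.basisFun (Fin n) ℝ).toBasis.toMatrix fun j => x j.succ - x 0 := by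
    ext i j; simp [diffMatrix, Module.Basis.toMatrix_apply]
  rw [Pn, mem_ofPred_eq, affineSpan_range_eq_top_iff_span_vsub,
    (EuclideanSpace.basisFun (Fin n) ℝ).toBasis.span_range_eq_top_iff_det_ne_zero, hbasis,
    Module.Basis.det_apply]
  rfl

theorem continuous_diffMatrix :
    Continuous fun x : Fin (n + 1) → EuclideanSpace ℝ (Fin n) => diffMatrix x := by
  unfold diffMatrix; fun_prop

noncomputable def configOfDiffMatrix
    (p : EuclideanSpace ℝ (Fin n) × Matrix (Fin n) (Fin n) ℝ) :
    Fin (n + 1) → EuclideanSpace ℝ (Fin n) :=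
  Fin.cons p.1 fun j => p.1 + WithLp.toLp 2 fun i => p.2 i j

theorem diffMatrix_configOfDiffMatrix
    (p : EuclideanSpace ℝ (Fin n) × Matrix (Fin n) (Fin n) ℝ) :
    diffMatrix (configOfDiffMatrix p) = p.2 := by
  ext i j; simp [diffMatrix, configOfDiffMatrix]

theorem configOfDiffMatrix_diffMatrix (x : Fin (n + 1) → EuclideanSpace ℝ (Fin n)) :
    configOfDiffMatrix (x 0, diffMatrix x) = x := by
  ext k i
  cases k using Fin.cases <;> simp [diffMatrix, configOfDiffMatrix]

theorem continuous_configOfDiffMatrix : Continuous (configOfDiffMatrix (n := n)) := by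
  refine continuous_pi fun k => ?_
  cases k using Fin.cases <;> simp only [configOfDiffMatrix, Fin.cons_zero, Fin.cons_succ] <;>
    fun_prop

theorem preimage_diffMatrix_eq_image (S : Set (Matrix (Fin n) (Fin n) ℝ)) :
    diffMatrix ⁻¹' S = configOfDiffMatrix '' (univ ×ˢ S) := by
  ext x
  refine ⟨fun hx => ⟨(x 0, diffMatrix x), ⟨mem_univ _, hx⟩, configOfDiffMatrix_diffMatrix x⟩, ?_⟩
  rintro ⟨p, ⟨-, hp⟩, rfl⟩
  rwa [Set.mem_preimage, diffMatrix_configOfDiffMatrix]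

theorem IsPathConnected.preimage_diffMatrix {S : Set (Matrix (Fin n) (Fin n) ℝ)}
    (hS : IsPathConnected S) :
    IsPathConnected (diffMatrix ⁻¹' S : Set (Fin (n + 1) → EuclideanSpace ℝ (Fin n))) := by
  rw [preimage_diffMatrix_eq_image]
  exact (isPathConnected_univ.prod hS).image continuous_configOfDiffMatrix

theorem Qpos_eq_preimage : Qpos n = diffMatrix ⁻¹' (Matrix.posDetSubmonoid (Fin n) : Set _) := by
  ext x
  simpa [Qpos, mem_Pn_iff_det_ne_zero, Matrix.mem_posDetSubmonoid] using fun h => h.ne'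

theorem Qneg_eq_preimage :
    Qneg n = diffMatrix ⁻¹' {M : Matrix (Fin n) (Fin n) ℝ | M.det < 0} := by
  ext x
  simpa [Qneg, mem_Pn_iff_det_ne_zero] using fun h => h.ne

end Configurations

theorem nondegenerate_two_components {n : ℕ} (hn : 1 ≤ n) :
    (Qpos n).Nonempty ∧ (Qneg n).Nonempty ∧
    IsOpen (Qpos n) ∧ IsOpen (Qneg n) ∧
    Disjoint (Qpos n) (Qneg n) ∧
    IsPathConnected (Qpos n) ∧ IsPathConnected (Qneg n) ∧
    Qpos n ∪ Qneg n = Pn n ∧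
    (∀ S : Set (Fin (n + 1) → EuclideanSpace ℝ (Fin n)),
      S ⊆ Pn n → IsConnected S → S ⊆ Qpos n ∨ S ⊆ Qneg n) := by
  have : Nonempty (Fin n) := ⟨⟨0, hn⟩⟩
  have hpos : IsPathConnected (Qpos n) :=
    Qpos_eq_preimage ▸ Matrix.isPathConnected_posDet.preimage_diffMatrix
  have hneg : IsPathConnected (Qneg n) :=
    Qneg_eq_preimage ▸ Matrix.isPathConnected_setOf_det_neg.preimage_diffMatrix
  have hdet : Continuous fun x : Fin (n + 1) → EuclideanSpace ℝ (Fin n) => (diffMatrix x).det :=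
    continuous_diffMatrix.matrix_det
  have hopen_pos : IsOpen (Qpos n) := Qpos_eq_preimage ▸ isOpen_Ioi.preimage hdet
  have hopen_neg : IsOpen (Qneg n) := Qneg_eq_preimage ▸ isOpen_Iio.preimage hdet
  have hdisj : Disjoint (Qpos n) (Qneg n) :=
    Set.disjoint_left.2 fun _ hpos hneg => lt_asymm hpos.2 hneg.2
  have hunion : Qpos n ∪ Qneg n = Pn n := by
    ext x
    simp only [Qpos, Qneg, mem_union, mem_sep_iff, ← and_or_left, and_iff_left_iff_imp]
    exact fun hx => (mem_Pn_iff_det_ne_zero.1 hx).lt_or_gt.symm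
  refine ⟨hpos.nonempty, hneg.nonempty, hopen_pos, hopen_neg, hdisj, hpos, hneg, hunion,
    fun S hS hconn => ?_⟩
  exact hconn.isPreconnected.subset_or_subset hopen_pos hopen_neg hdisj (hunion ▸ hS)
end

section
/- Let n ≥ 1 and let E be a weakly connected digraph on Fin N. Assume that every maximal strong component of E has at least n + 1 elements and that some maximal strong component of E has exactly n + 1 elements. Then the set Q := {x : Fin N → EuclideanSpace ℝ (Fin n) | for every maximal strong component C of E, affineSpan ℝ (x '' C) = ⊤} is nonempty and is not path-connected. -/
/-!
The moment curve `t ↦ (t, t², …, tⁿ)` puts any `n + 1` distinct points in general position (their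
affine dependencies are killed by a Vandermonde determinant), so it gives a point of `Q` as soon as
every maximal strong component has at least `n + 1` vertices.

If `C` has exactly `n + 1` vertices, the determinant of the `n` edge vectors of the simplex `x(C)`
is continuous on `Q` and never vanishes there. Composing a configuration with a reflection keeps it
in `Q` and flips the sign of that determinant, so by the intermediate value theorem `Q` is not
even connected.
-/

/-- `C` is a maximal strong component of the digraph `E` on `Fin N`:
it is the strong component of one of its vertices and is closed under
outgoing edges. -/
def IsMaxSCC {N : ℕ} (E : Fin N → Fin N → Prop) (C : Set (Fin N)) : Prop :=
  (∃ v ∈ C, C = {w | Relation.ReflTransGen E v w ∧ Relation.ReflTransGen E w v}) ∧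
  (∀ u ∈ C, ∀ w : Fin N, E u w → w ∈ C)

open Module Set Matrix

theorem Set.Finite.exists_injective_fin_range_eq {α : Type*} {S : Set α} (hfin : S.Finite)
    {k : ℕ} (hS : S.ncard = k) : ∃ c : Fin k → α, Function.Injective c ∧ range c = S := by
  have : Finite S := hfin.to_subtype
  let e : S ≃ Fin k := Finite.equivFinOfCardEq (by rw [Nat.card_coe_set_eq, hS])
  refine ⟨(↑) ∘ e.symm, Subtype.val_injective.comp e.symm.injective, ?_⟩
  rw [range_comp, e.symm.range_eq_univ, image_univ, Subtype.range_coe]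

noncomputable def momentCurve (n : ℕ) (t : ℝ) : EuclideanSpace ℝ (Fin n) :=
  WithLp.toLp 2 fun j => t ^ ((j : ℕ) + 1)

theorem affineIndependent_momentCurve_comp {n : ℕ} {s : Fin (n + 1) → ℝ}
    (hs : Function.Injective s) : AffineIndependent ℝ (momentCurve n ∘ s) := by
  rw [affineIndependent_iff_of_fintype]
  intro w hw hws
  rw [Finset.weightedVSub_eq_linear_combination _ hw] at hws
  have hvecMul : w ᵥ* vandermonde s = 0 := by
    funext j
    induction j using Fin.cases with
    | zero => simpa [vecMul, dotProduct] using hw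
    | succ k => simpa [vecMul, dotProduct, momentCurve] using congr($hws k)
  exact congrFun (eq_zero_of_vecMul_eq_zero (det_vandermonde_ne_zero_iff.mpr hs) hvecMul)

theorem affineSpan_momentCurve_image_eq_top {n : ℕ} {S : Set ℝ} (hS : n + 1 ≤ S.ncard) :
    affineSpan ℝ (momentCurve n '' S) = ⊤ := by
  obtain ⟨t, htS, ht⟩ := exists_subset_card_eq hS
  obtain ⟨s, hs, rfl⟩ := (finite_of_ncard_pos (ht ▸ n.succ_pos)).exists_injective_fin_range_eq ht
  have hspan : affineSpan ℝ (range (momentCurve n ∘ s)) = ⊤ :=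
    (affineIndependent_momentCurve_comp hs).affineSpan_eq_top_iff_card_eq_finrank_add_one.mpr
      (by simp)
  rw [range_comp] at hspan
  exact top_le_iff.mp (hspan ▸ affineSpan_mono ℝ (image_mono htS))

theorem exists_linearEquiv_det_eq_neg_one (E : Type*) [NormedAddCommGroup E]
    [InnerProductSpace ℝ E] [FiniteDimensional ℝ E] [Nontrivial E] :
    ∃ f : E ≃ₗ[ℝ] E, LinearMap.det (f : E →ₗ[ℝ] E) = -1 := by
  obtain ⟨v, hv⟩ := exists_ne (0 : E)
  refine ⟨(ℝ ∙ v)ᗮ.reflection.toLinearEquiv, ?_⟩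
  rw [Submodule.det_reflection, Submodule.orthogonal_orthogonal, finrank_span_singleton hv, pow_one]

section simplexDet

variable {E : Type*} [AddCommGroup E] [Module ℝ E] {n : ℕ}

noncomputable def simplexDet (b : Basis (Fin n) ℝ E) (p : Fin (n + 1) → E) : ℝ :=
  b.det fun i => p i.succ - p 0

theorem simplexDet_comp (b : Basis (Fin n) ℝ E) (f : E →ₗ[ℝ] E) (p : Fin (n + 1) → E) :
    simplexDet b (f ∘ p) = LinearMap.det f * simplexDet b p := by
  simp only [simplexDet, Function.comp_apply, ← map_sub]
  exact b.det_comp f _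

theorem simplexDet_ne_zero (b : Basis (Fin n) ℝ E) {p : Fin (n + 1) → E}
    (hp : affineSpan ℝ (range p) = ⊤) : simplexDet b p ≠ 0 := by
  have hspan := AffineSubspace.vectorSpan_eq_top_of_affineSpan_eq_top ℝ E E hp
  rw [vectorSpan_range_eq_span_range_vsub_right ℝ p 0, ← Fin.cons_self_tail (fun i => p i -ᵥ p 0),
    Fin.range_cons, vsub_self, Submodule.span_insert_zero] at hspan
  have hcard : Fintype.card (Fin n) = finrank ℝ E := by
    rw [Fintype.card_fin, finrank_eq_card_basis b, Fintype.card_fin]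
  have hunit := b.isUnit_det (basisOfTopLeSpanOfCardEqFinrank _ hspan.ge hcard)
  rw [coe_basisOfTopLeSpanOfCardEqFinrank] at hunit
  exact hunit.ne_zero

theorem continuous_simplexDet [TopologicalSpace E] [IsTopologicalAddGroup E]
    [ContinuousSMul ℝ E] [T2Space E] (b : Basis (Fin n) ℝ E) :
    Continuous (simplexDet b) := by
  have : FiniteDimensional ℝ E := b.finiteDimensional_of_finite
  unfold simplexDet
  simp only [Basis.det_apply]
  refine Continuous.matrix_det (continuous_matrix fun i j => ?_)
  simp only [Basis.toMatrix_apply, ← Basis.coord_apply]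
  exact (b.coord i).continuous_of_finiteDimensional.comp
    ((continuous_apply _).sub (continuous_apply _))

end simplexDet

theorem not_isPreconnected_of_sign_flip {X : Type*} [TopologicalSpace X] {S : Set X}
    {f : X → ℝ} (hf : ContinuousOn f S) (hS : ∀ x ∈ S, f x ≠ 0) {x y : X} (hx : x ∈ S)
    (hy : y ∈ S) (hxy : f y = -f x) : ¬IsPreconnected S := by
  intro hpre
  obtain ⟨z, hz, hfz⟩ : (0 : ℝ) ∈ f '' S := by
    rcases (hS x hx).lt_or_gt with h | h
    · exact hpre.intermediate_value hx hy hf ⟨h.le, by linarith⟩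
    · exact hpre.intermediate_value hy hx hf ⟨by linarith, h.le⟩
  exact hS z hz hfz

theorem not_isPreconnected_of_forall_affineSpan_eq_top {ι E : Type*} [NormedAddCommGroup E]
    [InnerProductSpace ℝ E] [FiniteDimensional ℝ E] {n : ℕ} (hn : 1 ≤ n) (hE : finrank ℝ E = n)
    {S : Set (ι → E)} (hne : S.Nonempty) (hinv : ∀ f : E ≃ₗ[ℝ] E, ∀ z ∈ S, f ∘ z ∈ S)
    (c : Fin (n + 1) → ι) (hc : ∀ z ∈ S, affineSpan ℝ (range (z ∘ c)) = ⊤) :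
    ¬IsPreconnected S := by
  obtain ⟨x, hx⟩ := hne
  have : Nontrivial E := nontrivial_of_finrank_pos (R := ℝ) (by omega)
  obtain ⟨r, hr⟩ := exists_linearEquiv_det_eq_neg_one E
  let b := finBasisOfFinrankEq ℝ E hE
  refine not_isPreconnected_of_sign_flip (f := fun z => simplexDet b (z ∘ c))
    ((continuous_simplexDet b).comp (continuous_pi fun i => continuous_apply (c i))).continuousOn
    (fun z hz => simplexDet_ne_zero b (hc z hz)) hx (hinv r x hx) ?_
  change simplexDet b ((r : E →ₗ[ℝ] E) ∘ x ∘ c) = _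
  rw [simplexDet_comp, hr, neg_one_mul]

theorem Q_nonempty_not_pathConnected_of_critical_component_general
    {N n : ℕ} (hn : 1 ≤ n) (E : Fin N → Fin N → Prop)
    (hge : ∀ C : Set (Fin N), IsMaxSCC E C → n + 1 ≤ C.ncard)
    (hex : ∃ C : Set (Fin N), IsMaxSCC E C ∧ C.ncard = n + 1) :
    ({x : Fin N → EuclideanSpace ℝ (Fin n) |
        ∀ C : Set (Fin N), IsMaxSCC E C → affineSpan ℝ (x '' C) = ⊤}).Nonempty ∧
    ¬ IsPathConnected {x : Fin N → EuclideanSpace ℝ (Fin n) |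
        ∀ C : Set (Fin N), IsMaxSCC E C → affineSpan ℝ (x '' C) = ⊤} := by
  set Q := {x : Fin N → EuclideanSpace ℝ (Fin n) |
    ∀ C : Set (Fin N), IsMaxSCC E C → affineSpan ℝ (x '' C) = ⊤}
  have hne : Q.Nonempty := by
    refine ⟨fun i => momentCurve n (i : ℕ), fun C hC => ?_⟩
    rw [← image_image (momentCurve n) (fun i : Fin N => ((i : ℕ) : ℝ))]
    refine affineSpan_momentCurve_image_eq_top ?_
    have hinj : Function.Injective fun i : Fin N => ((i : ℕ) : ℝ) :=
      Nat.cast_injective.comp Fin.val_injective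
    exact ncard_image_of_injective C hinj ▸ hge C hC
  have hinv : ∀ f : EuclideanSpace ℝ (Fin n) ≃ₗ[ℝ] EuclideanSpace ℝ (Fin n), ∀ x ∈ Q, f ∘ x ∈ Q :=
    fun f x hx C hC => by
      rw [image_comp]
      exact AffineMap.span_eq_top_of_surjective (f := f.toLinearMap.toAffineMap) f.surjective
        (hx C hC)
  obtain ⟨C, hC, hCcard⟩ := hex
  obtain ⟨c, -, rfl⟩ :=
    (finite_of_ncard_pos (hCcard ▸ n.succ_pos)).exists_injective_fin_range_eq hCcard
  refine ⟨hne, fun hQ => not_isPreconnected_of_forall_affineSpan_eq_top hn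
    (finrank_euclideanSpace_fin) hne hinv c (fun x hx => ?_) hQ.isConnected.isPreconnected⟩
  rw [range_comp]
  exact hx _ hC

theorem Q_nonempty_not_pathConnected_of_critical_component
    {N n : ℕ} (hn : 1 ≤ n) (E : Fin N → Fin N → Prop)
    (hwc : ∀ i j : Fin N, Relation.ReflTransGen (fun a b => E a b ∨ E b a) i j)
    (hge : ∀ C : Set (Fin N), IsMaxSCC E C → n + 1 ≤ C.ncard)
    (hex : ∃ C : Set (Fin N), IsMaxSCC E C ∧ C.ncard = n + 1) :
    ({x : Fin N → EuclideanSpace ℝ (Fin n) |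
        ∀ C : Set (Fin N), IsMaxSCC E C → affineSpan ℝ (x '' C) = ⊤}).Nonempty ∧
    ¬ IsPathConnected {x : Fin N → EuclideanSpace ℝ (Fin n) |
        ∀ C : Set (Fin N), IsMaxSCC E C → affineSpan ℝ (x '' C) = ⊤} :=
  Q_nonempty_not_pathConnected_of_critical_component_general hn E hge hex
end

section
/- Let n ≥ 1 and N > n + 1. Then the set of non-degenerate configurations {x : Fin N → EuclideanSpace ℝ (Fin n) | affineSpan ℝ (Set.range x) = ⊤} is open, dense, and path-connected in the space Fin N → EuclideanSpace ℝ (Fin n). -/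
open Set Function Metric

variable {n : ℕ}

/-- A configuration with an affinely independent subfamily of `n+1` points spans. -/
lemma aux_span_top_of_subfamily {N : ℕ} {x : Fin N → EuclideanSpace ℝ (Fin n)}
    {s : Finset (Fin N)} (hcard : s.card = n + 1)
    (h : AffineIndependent ℝ fun i : s => x i) :
    affineSpan ℝ (Set.range x) = ⊤ := by
  have hc : Fintype.card s = Module.finrank ℝ (EuclideanSpace ℝ (Fin n)) + 1 := by
    simp [Fintype.card_coe, hcard, finrank_euclideanSpace_fin]
  have htop := h.affineSpan_eq_top_iff_card_eq_finrank_add_one.mpr hc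
  refine top_unique ?_
  rw [← htop]
  exact affineSpan_mono _ (by rintro _ ⟨i, rfl⟩; exact ⟨i, rfl⟩)

/-- A spanning configuration has an affinely independent subfamily of `n+1` points. -/
lemma aux_exists_subfamily {N : ℕ} {x : Fin N → EuclideanSpace ℝ (Fin n)}
    (hx : affineSpan ℝ (Set.range x) = ⊤) :
    ∃ s : Finset (Fin N), s.card = n + 1 ∧ AffineIndependent ℝ fun i : s => x i := by
  classical
  obtain ⟨t, hts, htspan, htind⟩ := exists_affineIndependent ℝ (EuclideanSpace ℝ (Fin n))
    (Set.range x)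
  have htfin : t.Finite := finite_set_of_fin_dim_affineIndependent ℝ htind
  haveI := htfin.fintype
  have hcardt : Fintype.card t = n + 1 := by
    have := htind.affineSpan_eq_top_iff_card_eq_finrank_add_one.mp
      (by rw [Subtype.range_coe, htspan, hx])
    simpa [finrank_euclideanSpace_fin] using this
  -- choose a preimage index for each point of t
  have hch : ∀ p : t, ∃ i : Fin N, x i = (p : EuclideanSpace ℝ (Fin n)) := fun p => hts p.2
  choose f hf using hch
  have hfinj : Function.Injective f := by
    intro p q hpq
    apply Subtype.ext
    rw [← hf p, ← hf q, hpq]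
  refine ⟨Finset.univ.image f, ?_, ?_⟩
  · rw [Finset.card_image_of_injective _ hfinj, Finset.card_univ, hcardt]
  · -- the family on the image is affinely independent
    have hmem : ∀ i : Finset.univ.image f, x i ∈ t := by
      rintro ⟨i, hi⟩
      obtain ⟨p, -, rfl⟩ := Finset.mem_image.mp hi
      rw [hf p]; exact p.2
    have := htind.comp_embedding
      ⟨fun i : Finset.univ.image f => (⟨x i, hmem i⟩ : t), ?_⟩
    · exact this
    · intro i j hij
      apply Subtype.ext
      obtain ⟨p, -, hp⟩ := Finset.mem_image.mp i.2
      obtain ⟨q, -, hq⟩ := Finset.mem_image.mp j.2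
      have hxi : x i = x j := congrArg Subtype.val hij
      rw [← hp, ← hq] at hxi ⊢
      rw [hf p, hf q] at hxi
      rw [show p = q from hfinj (congrArg f (Subtype.ext hxi)) ▸ rfl]

lemma aux_isOpen_aind {ι : Type*} [Finite ι] [Nonempty ι] :
    IsOpen {p : ι → EuclideanSpace ℝ (Fin n) | AffineIndependent ℝ p} := by
  classical
  obtain ⟨i0⟩ := ‹Nonempty ι›
  have hset : {p : ι → EuclideanSpace ℝ (Fin n) | AffineIndependent ℝ p}
      = (fun p : ι → EuclideanSpace ℝ (Fin n) =>
          fun i : {z : ι // z ≠ i0} => p i -ᵥ p i0) ⁻¹'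
        {v : {z : ι // z ≠ i0} → EuclideanSpace ℝ (Fin n) | LinearIndependent ℝ v} := by
    ext p
    exact affineIndependent_iff_linearIndependent_vsub ℝ p i0
  rw [hset]
  refine isOpen_setOf_linearIndependent.preimage ?_
  exact continuous_pi fun i => (continuous_apply (i : ι)).sub (continuous_apply i0)

lemma aux_isOpen_S {N : ℕ} :
    IsOpen {x : Fin N → EuclideanSpace ℝ (Fin n) | affineSpan ℝ (Set.range x) = ⊤} := by
  classical
  have hset : {x : Fin N → EuclideanSpace ℝ (Fin n) | affineSpan ℝ (Set.range x) = ⊤}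
      = ⋃ s ∈ {s : Finset (Fin N) | s.card = n + 1},
        (fun (x : Fin N → EuclideanSpace ℝ (Fin n)) (i : s) => x i) ⁻¹'
          {p : s → EuclideanSpace ℝ (Fin n) | AffineIndependent ℝ p} := by
    ext x
    simp only [Set.mem_setOf_eq, Set.mem_iUnion, Set.mem_preimage]
    constructor
    · intro hx
      obtain ⟨s, hs, hind⟩ := aux_exists_subfamily hx
      exact ⟨s, hs, hind⟩
    · rintro ⟨s, hs, hind⟩
      exact aux_span_top_of_subfamily hs hind
  rw [hset]
  refine isOpen_biUnion fun s hs => ?_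
  haveI : Nonempty s := by
    rw [Finset.nonempty_coe_sort]
    refine Finset.card_pos.mp ?_
    rw [Set.mem_setOf_eq] at hs
    omega
  exact aux_isOpen_aind.preimage (continuous_pi fun i : s => continuous_apply (i : Fin N))

lemma aux_dense_compl {Q : AffineSubspace ℝ (EuclideanSpace ℝ (Fin n))} (hQ : Q ≠ ⊤) :
    Dense ((Q : Set (EuclideanSpace ℝ (Fin n)))ᶜ) := by
  rw [← interior_eq_empty_iff_dense_compl]
  by_contra h
  have hne : (interior (Q : Set (EuclideanSpace ℝ (Fin n)))).Nonempty :=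
    Set.nonempty_iff_ne_empty.mpr h
  have htop : affineSpan ℝ (interior (Q : Set (EuclideanSpace ℝ (Fin n)))) = ⊤ :=
    isOpen_interior.affineSpan_eq_top hne
  have hle : affineSpan ℝ (interior (Q : Set (EuclideanSpace ℝ (Fin n)))) ≤ Q :=
    affineSpan_le.mpr (interior_subset)
  exact hQ (top_unique (htop ▸ hle))

lemma aux_span_ne_top (hn : 1 ≤ n) {ι : Type*} (y : ι → EuclideanSpace ℝ (Fin n))
    (s : Finset ι) (hcard : s.card ≤ n) :
    affineSpan ℝ (y '' (s : Set ι)) ≠ ⊤ := by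
  classical
  intro htop
  rcases s.eq_empty_or_nonempty with rfl | hsne
  · simp only [Finset.coe_empty, Set.image_empty] at htop
    have h0 : (0 : EuclideanSpace ℝ (Fin n)) ∈ affineSpan ℝ (∅ : Set (EuclideanSpace ℝ (Fin n))) := by
      rw [htop]; exact AffineSubspace.mem_top ℝ _ _
    rw [AffineSubspace.span_empty] at h0
    exact h0
  · have hco : y '' (s : Set ι) = Set.range fun i : s => y i := by
      ext p
      constructor
      · rintro ⟨i, hi, rfl⟩
        exact ⟨⟨i, hi⟩, rfl⟩
      · rintro ⟨⟨i, hi⟩, rfl⟩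
        exact ⟨i, hi, rfl⟩
    have hcardpos : 0 < s.card := Finset.card_pos.mpr hsne
    have hfc : Fintype.card s = (s.card - 1) + 1 := by
      rw [Fintype.card_coe]; omega
    have hrank := finrank_vectorSpan_range_le ℝ (fun i : s => y i) hfc
    rw [← hco] at hrank
    have hvtop : vectorSpan ℝ (y '' (s : Set ι)) = ⊤ := by
      rw [← direction_affineSpan, htop, AffineSubspace.direction_top]
    rw [hvtop] at hrank
    simp [finrank_top, finrank_euclideanSpace_fin] at hrank
    omega

lemma aux_dense_biInter {α β : Type*} [TopologicalSpace α] [DecidableEq β] (P : Finset β)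
    (f : β → Set α) (ho : ∀ s ∈ P, IsOpen (f s)) (hd : ∀ s ∈ P, Dense (f s)) :
    Dense (⋂ s ∈ P, f s) := by
  classical
  induction P using Finset.induction with
  | empty => simpa using dense_univ
  | @insert a P ha ih =>
    rw [Finset.set_biInter_insert]
    exact (hd a (Finset.mem_insert_self a P)).inter_of_isOpen_left
      (ih (fun s hs => ho s (Finset.mem_insert_of_mem hs))
          (fun s hs => hd s (Finset.mem_insert_of_mem hs)))
      (ho a (Finset.mem_insert_self a P))

lemma aux_exists_avoid (hn : 1 ≤ n) {ι : Type*} [DecidableEq ι] (y : ι → EuclideanSpace ℝ (Fin n))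
    (t : Finset ι) (c : EuclideanSpace ℝ (Fin n)) {ε : ℝ} (hε : 0 < ε) :
    ∃ p : EuclideanSpace ℝ (Fin n), dist p c < ε ∧
      ∀ s ⊆ t, s.card ≤ n → p ∉ affineSpan ℝ (y '' (s : Set ι)) := by
  classical
  set P : Finset (Finset ι) := t.powerset.filter (fun s => s.card ≤ n) with hP
  have hd : Dense (⋂ s ∈ P, ((affineSpan ℝ (y '' (s : Set ι)) : Set (EuclideanSpace ℝ (Fin n)))ᶜ)) := by
    refine aux_dense_biInter P _ (fun s _ => ?_) (fun s hs => ?_)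
    · have : IsClosed (affineSpan ℝ (y '' (s : Set ι)) : Set (EuclideanSpace ℝ (Fin n))) :=
        AffineSubspace.closed_of_finiteDimensional _
      exact this.isOpen_compl
    · refine aux_dense_compl ?_
      refine aux_span_ne_top hn y s ?_
      rw [hP, Finset.mem_filter] at hs
      exact hs.2
  obtain ⟨p, hp1, hp2⟩ := hd.exists_mem_open isOpen_ball ⟨c, mem_ball_self hε⟩
  refine ⟨p, mem_ball.mp hp2, fun s hst hs => ?_⟩
  have hsP : s ∈ P := by
    rw [hP, Finset.mem_filter, Finset.mem_powerset]
    exact ⟨hst, hs⟩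
  have := Set.mem_iInter₂.mp hp1 s hsP
  exact this

lemma aux_exists_GP (hn : 1 ≤ n) {ι : Type*} [DecidableEq ι] (t : Finset ι)
    (x : ι → EuclideanSpace ℝ (Fin n)) {ε : ℝ} (hε : 0 < ε) :
    ∃ y : ι → EuclideanSpace ℝ (Fin n), (∀ i ∈ t, dist (y i) (x i) < ε) ∧
      ∀ s ⊆ t, s.card ≤ n + 1 → AffineIndependent ℝ (fun i : s => y i) := by
  classical
  induction t using Finset.induction with
  | empty =>
    refine ⟨x, by simp, fun s hs _ => ?_⟩
    rw [Finset.subset_empty.mp hs]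
    exact affineIndependent_of_subsingleton ℝ _
  | @insert a t ha ih =>
    obtain ⟨y, hy1, hy3⟩ := ih
    obtain ⟨p, hp1, hp2⟩ := aux_exists_avoid hn y t (x a) hε
    set y' := Function.update y a p with hy'
    have hupd : ∀ i ∈ t, y' i = y i := fun i hi =>
      Function.update_of_ne (fun h => ha (by rwa [h] at hi)) _ _
    refine ⟨y', ?_, ?_⟩
    · intro i hi
      rcases Finset.mem_insert.mp hi with rfl | hit
      · simpa [y'] using hp1
      · rw [hupd i hit]; exact hy1 i hit
    · intro s hs hcard
      by_cases has : a ∈ s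
      · have hsub : s.erase a ⊆ t := by
          intro i hi
          rcases Finset.mem_insert.mp (hs (Finset.mem_of_mem_erase hi)) with h | h
          · exact absurd h (Finset.ne_of_mem_erase hi)
          · exact h
        have hbase : AffineIndependent ℝ (fun i : s.erase a => y i) :=
          hy3 _ hsub (by have := Finset.card_erase_of_mem has; omega)
        refine AffineIndependent.affineIndependent_of_notMem_span
          (i := (⟨a, has⟩ : s)) ?_ ?_
        · -- reindex from erase
          have hmem : ∀ z : {w : s // w ≠ ⟨a, has⟩}, ((z : s) : ι) ∈ s.erase a := by
            intro z
            refine Finset.mem_erase.mpr ⟨fun h => z.2 (Subtype.ext h), (z : s).2⟩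
          let emb : {w : s // w ≠ ⟨a, has⟩} ↪ (s.erase a : Finset ι) :=
            ⟨fun z => ⟨((z : s) : ι), hmem z⟩,
             by
               intro u v huv
               have h2 : ((u : s) : ι) = ((v : s) : ι) := by simpa using huv
               exact Subtype.ext (Subtype.ext h2)⟩
          have hcomp := hbase.comp_embedding emb
          have heq : ((fun i : s.erase a => y i) ∘ emb)
              = fun z : {w : s // w ≠ ⟨a, has⟩} => y' ((z : s) : ι) := by
            funext z
            simp only [Function.comp_apply]
            show y (((z : s) : ι)) = y' (((z : s) : ι))
            exact (hupd _ (hsub (hmem z))).symm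
          rw [heq] at hcomp
          exact hcomp
        · -- the new point avoids the span
          have himg : (fun i : s => y' i) '' {w : s | w ≠ ⟨a, has⟩}
              = y '' ((s.erase a : Finset ι) : Set ι) := by
            ext q
            constructor
            · rintro ⟨z, hz, rfl⟩
              refine ⟨(z : ι), Finset.mem_erase.mpr ⟨fun h => hz (Subtype.ext h), z.2⟩, ?_⟩
              exact (hupd _ (hsub (Finset.mem_erase.mpr
                ⟨fun h => hz (Subtype.ext h), z.2⟩))).symm
            · rintro ⟨i, hi, rfl⟩
              refine ⟨⟨i, Finset.mem_of_mem_erase hi⟩,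
                fun h => (Finset.ne_of_mem_erase hi) (congrArg Subtype.val h), ?_⟩
              exact hupd _ (hsub hi)
          have hya : y' ((⟨a, has⟩ : s) : ι) = p := Function.update_self _ _ _
          rw [himg, hya]
          exact hp2 _ (fun i hi => hsub hi) (by have := Finset.card_erase_of_mem has; omega)
      · have hsub : s ⊆ t := by
          intro i hi
          rcases Finset.mem_insert.mp (hs hi) with h | h
          · exact absurd (h ▸ hi) has
          · exact h
        have heq2 : (fun i : s => y' i) = fun i : s => y i := by
          funext i
          exact hupd i (hsub i.2)
        rw [heq2]
        exact hy3 s hsub (by omega)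

lemma aux_dense_S {N : ℕ} (hn : 1 ≤ n) (hN : n + 1 < N) :
    Dense {x : Fin N → EuclideanSpace ℝ (Fin n) | affineSpan ℝ (Set.range x) = ⊤} := by
  classical
  rw [Metric.dense_iff]
  intro z r hr
  obtain ⟨y, hy1, hy2⟩ := aux_exists_GP hn (Finset.univ : Finset (Fin N)) z hr
  refine ⟨y, ?_, ?_⟩
  · rw [mem_ball, dist_pi_lt_iff hr]
    intro i
    exact hy1 i (Finset.mem_univ i)
  · obtain ⟨s, hsub, hscard⟩ := Finset.exists_subset_card_eq
      (show n + 1 ≤ (Finset.univ : Finset (Fin N)).card by simp; omega)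
    exact aux_span_top_of_subfamily hscard (hy2 s hsub (le_of_eq hscard))

lemma aux_mem_of_agree {N : ℕ} (hn : 1 ≤ n) (hN : n + 1 < N)
    {w' : Fin N ⊕ Fin N → EuclideanSpace ℝ (Fin n)}
    (HGP : ∀ s : Finset (Fin N ⊕ Fin N), s.card ≤ n + 1 →
      AffineIndependent ℝ (fun i : s => w' i))
    (c : Fin N → EuclideanSpace ℝ (Fin n)) (g : Fin N → Fin N ⊕ Fin N)
    (hg : Function.Injective g) (k : Fin N) (hagree : ∀ i, i ≠ k → c i = w' (g i)) :
    affineSpan ℝ (Set.range c) = ⊤ := by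
  classical
  obtain ⟨s, hsub, hscard⟩ := Finset.exists_subset_card_eq
    (show n + 1 ≤ (Finset.univ.erase k).card by
      rw [Finset.card_erase_of_mem (Finset.mem_univ k), Finset.card_univ, Fintype.card_fin]
      omega)
  have hks : ∀ i ∈ s, i ≠ k := fun i hi => Finset.ne_of_mem_erase (hsub hi)
  have hcard2 : (s.image g).card = n + 1 := by
    rw [Finset.card_image_of_injective _ hg, hscard]
  have hind := HGP (s.image g) (le_of_eq hcard2)
  let emb : (s : Finset (Fin N)) ↪ (s.image g : Finset (Fin N ⊕ Fin N)) :=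
    ⟨fun i => ⟨g i, Finset.mem_image_of_mem g i.2⟩,
     by
       intro u v huv
       have h2 : g (u : Fin N) = g (v : Fin N) := congrArg Subtype.val huv
       exact Subtype.ext (hg h2)⟩
  have hcomp := hind.comp_embedding emb
  have heq : ((fun i : (s.image g : Finset (Fin N ⊕ Fin N)) => w' i) ∘ emb)
      = fun i : s => c i := by
    funext i
    simp only [Function.comp_apply]
    show w' (g i) = c i
    exact (hagree i (hks i i.2)).symm
  rw [heq] at hcomp
  exact aux_span_top_of_subfamily hscard hcomp

lemma aux_joined_halves {N : ℕ} (hn : 1 ≤ n) (hN : n + 1 < N)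
    {w' : Fin N ⊕ Fin N → EuclideanSpace ℝ (Fin n)}
    (HGP : ∀ s : Finset (Fin N ⊕ Fin N), s.card ≤ n + 1 →
      AffineIndependent ℝ (fun i : s => w' i)) :
    JoinedIn {x : Fin N → EuclideanSpace ℝ (Fin n) | affineSpan ℝ (Set.range x) = ⊤}
      (fun i => w' (Sum.inl i)) (fun i => w' (Sum.inr i)) := by
  classical
  set S := {x : Fin N → EuclideanSpace ℝ (Fin n) | affineSpan ℝ (Set.range x) = ⊤} with hS
  set h : ℕ → (Fin N → EuclideanSpace ℝ (Fin n)) :=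
    fun m i => if (i : ℕ) < m then w' (Sum.inr i) else w' (Sum.inl i) with hh
  have hNpos : 0 < N := by omega
  have hginj : ∀ m : ℕ, Function.Injective
      (fun i : Fin N => if (i : ℕ) < m then Sum.inr i else Sum.inl i) := by
    intro m u v huv
    by_cases hu : (u : ℕ) < m <;> by_cases hv : (v : ℕ) < m <;>
      simp [hu, hv] at huv <;> first | exact huv | exact absurd huv (by simp)
  have hmem : ∀ m, h m ∈ S := by
    intro m
    refine aux_mem_of_agree hn hN HGP (h m)
      (fun i => if (i : ℕ) < m then Sum.inr i else Sum.inl i) (hginj m) ⟨0, hNpos⟩ ?_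
    intro i _
    by_cases hi : (i : ℕ) < m <;> simp [hh, hi]
  have hstep : ∀ m, JoinedIn S (h m) (h (m + 1)) := by
    intro m
    by_cases hm : N ≤ m
    · have : h m = h (m + 1) := by
        funext i
        have : (i : ℕ) < m := lt_of_lt_of_le i.2 hm
        simp [hh, this, Nat.lt_succ_of_lt this]
      rw [this]
      exact JoinedIn.refl (hmem (m + 1))
    · push_neg at hm
      set κ : Fin N := ⟨m, hm⟩ with hκ
      set F : ℝ → (Fin N → EuclideanSpace ℝ (Fin n)) :=
        fun t i => if i = κ then ((1 - t) • w' (Sum.inl κ) + t • w' (Sum.inr κ)) else h m i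
        with hF
      have hFcont : ContinuousOn F (Set.Icc (0:ℝ) 1) := by
        apply Continuous.continuousOn
        refine continuous_pi fun i => ?_
        by_cases hi : i = κ
        · simp only [hF, hi, if_pos]
          exact (((continuous_const.sub continuous_id).smul continuous_const).add
            (continuous_id.smul continuous_const))
        · simp only [hF, hi, if_neg, if_false]
          exact continuous_const
      have hF0 : F 0 = h m := by
        funext i
        by_cases hi : i = κ
        · simp [hF, hh, hi, hκ]
        · simp [hF, hi]
      have hF1 : F 1 = h (m + 1) := by
        funext i
        by_cases hi : i = κ
        · simp [hF, hh, hi, hκ]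
        · have h2 : (i : ℕ) < m ↔ (i : ℕ) < m + 1 := by
            constructor
            · omega
            · intro h3
              rcases Nat.lt_succ_iff_lt_or_eq.mp h3 with h4 | h4
              · exact h4
              · exact absurd (Fin.ext h4 : i = κ) hi
          simp only [hF, hh, if_neg hi]
          by_cases h5 : (i : ℕ) < m
          · simp [h5, h2.mp h5]
          · rw [if_neg h5, if_neg (fun h6 => h5 (h2.mpr h6))]
      refine JoinedIn.ofLine hFcont hF0 hF1 ?_
      rintro _ ⟨t, -, rfl⟩
      refine aux_mem_of_agree hn hN HGP (F t)
        (fun i => if (i : ℕ) < m then Sum.inr i else Sum.inl i) (hginj m) κ ?_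
      intro i hi
      by_cases h5 : (i : ℕ) < m <;> simp [hF, hh, hi, h5]
  have hchain : ∀ m, JoinedIn S (h 0) (h m) := by
    intro m
    induction m with
    | zero => exact JoinedIn.refl (hmem 0)
    | succ m ih => exact ih.trans (hstep m)
  have h0 : h 0 = fun i => w' (Sum.inl i) := by
    funext i; simp [hh]
  have hNe : h N = fun i => w' (Sum.inr i) := by
    funext i; simp [hh, i.2]
  rw [← h0, ← hNe]
  exact hchain N

lemma aux_joinedIn {N : ℕ} (hn : 1 ≤ n) (hN : n + 1 < N)
    {x y : Fin N → EuclideanSpace ℝ (Fin n)}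
    (hx : affineSpan ℝ (Set.range x) = ⊤) (hy : affineSpan ℝ (Set.range y) = ⊤) :
    JoinedIn {z : Fin N → EuclideanSpace ℝ (Fin n) | affineSpan ℝ (Set.range z) = ⊤} x y := by
  classical
  set S := {z : Fin N → EuclideanSpace ℝ (Fin n) | affineSpan ℝ (Set.range z) = ⊤} with hS
  have hSopen : IsOpen S := aux_isOpen_S
  obtain ⟨εx, hεx, hballx⟩ := Metric.isOpen_iff.mp hSopen x hx
  obtain ⟨εy, hεy, hbally⟩ := Metric.isOpen_iff.mp hSopen y hy
  set δ : ℝ := min εx εy with hδ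
  have hδpos : 0 < δ := lt_min hεx hεy
  obtain ⟨w', hw1, hw2⟩ := aux_exists_GP hn (Finset.univ : Finset (Fin N ⊕ Fin N))
    (Sum.elim x y) hδpos
  have HGP : ∀ s : Finset (Fin N ⊕ Fin N), s.card ≤ n + 1 →
      AffineIndependent ℝ (fun i : s => w' i) :=
    fun s hcard => hw2 s (Finset.subset_univ s) hcard
  set x' : Fin N → EuclideanSpace ℝ (Fin n) := fun i => w' (Sum.inl i) with hx'
  set y' : Fin N → EuclideanSpace ℝ (Fin n) := fun i => w' (Sum.inr i) with hy'
  have hx'ball : x' ∈ Metric.ball x εx := by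
    rw [Metric.mem_ball, dist_pi_lt_iff hεx]
    intro i
    exact lt_of_lt_of_le (hw1 (Sum.inl i) (Finset.mem_univ _)) (min_le_left _ _)
  have hy'ball : y' ∈ Metric.ball y εy := by
    rw [Metric.mem_ball, dist_pi_lt_iff hεy]
    intro i
    exact lt_of_lt_of_le (hw1 (Sum.inr i) (Finset.mem_univ _)) (min_le_right _ _)
  have J1 : JoinedIn S x x' :=
    (((convex_ball x εx).isPathConnected ⟨x, Metric.mem_ball_self hεx⟩).joinedIn
      x (Metric.mem_ball_self hεx) x' hx'ball).mono hballx
  have J3 : JoinedIn S y y' :=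
    (((convex_ball y εy).isPathConnected ⟨y, Metric.mem_ball_self hεy⟩).joinedIn
      y (Metric.mem_ball_self hεy) y' hy'ball).mono hbally
  have J2 : JoinedIn S x' y' := aux_joined_halves hn hN HGP
  exact (J1.trans J2).trans J3.symm

theorem nondegenerate_open_dense_pathConnected {N n : ℕ} (hn : 1 ≤ n) (hN : n + 1 < N) :
    IsOpen {x : Fin N → EuclideanSpace ℝ (Fin n) | affineSpan ℝ (Set.range x) = ⊤} ∧
    Dense {x : Fin N → EuclideanSpace ℝ (Fin n) | affineSpan ℝ (Set.range x) = ⊤} ∧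
    IsPathConnected {x : Fin N → EuclideanSpace ℝ (Fin n) | affineSpan ℝ (Set.range x) = ⊤} := by
  have hdense := aux_dense_S (N := N) hn hN
  refine ⟨aux_isOpen_S, hdense, ?_⟩
  obtain ⟨x₀, hx₀⟩ := hdense.nonempty
  exact ⟨x₀, hx₀, fun {y} hy => aux_joinedIn hn hN hx₀ hy⟩
end

section
/- Let n ≥ 1 and let x : Fin (n+1) → EuclideanSpace ℝ (Fin n) be a non-degenerate configuration. For each i : Fin (n+1), let S i := affineSpan ℝ (x '' {j | j ≠ i}). Then for every proper subset V' of Fin (n+1) (i.e. V' ≠ Set.univ), affineSpan ℝ (x '' V'ᶜ) = ⨅ i ∈ V', S i (the infimum taken in the lattice of affine subspaces of EuclideanSpace ℝ (Fin n)). -/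
/-!
For an affinely independent family, taking affine spans of subfamilies turns finite intersections
of index sets into infima of affine subspaces. A non-degenerate configuration of `n + 1` points in
`ℝⁿ` is affinely independent, and `V'ᶜ` is the intersection of the sets `{j | j ≠ i}`, `i ∈ V'`.
-/

open Module

theorem affineIndependent_of_affineSpan_eq_top_of_card_eq_finrank_add_one {k V P ι : Type*}
    [DivisionRing k] [AddCommGroup V] [Module k V] [AddTorsor V P] [Fintype ι] {p : ι → P}
    (hp : affineSpan k (Set.range p) = ⊤) (hc : Fintype.card ι = finrank k V + 1) :
    AffineIndependent k p := by
  rw [affineIndependent_iff_le_finrank_vectorSpan k p hc,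
    AffineSubspace.vectorSpan_eq_top_of_affineSpan_eq_top k V P hp, finrank_top]

section

variable {k V P ι κ : Type*} [Ring k] [Nontrivial k] [AddCommGroup V] [Module k V]
  [AddTorsor V P]

theorem AffineIndependent.affineSpan_image_biInter {p : ι → P} (ha : AffineIndependent k p)
    (t : κ → Set ι) {s : Set κ} (hs : s.Finite) :
    affineSpan k (p '' ⋂ j ∈ s, t j) =
      affineSpan k (Set.range p) ⊓ ⨅ j ∈ s, affineSpan k (p '' t j) := by
  induction s, hs using Set.Finite.induction_on with
  | empty => simp [Set.image_univ]
  | @insert j s _ _ ih =>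
    rw [Set.biInter_insert, ← ha.inf_affineSpan_eq_affineSpan_inter, ih, iInf_insert]
    ac_rfl

theorem AffineBasis.affineSpan_image_biInter (b : AffineBasis ι k P) (t : κ → Set ι) {s : Set κ}
    (hs : s.Finite) : affineSpan k (b '' ⋂ j ∈ s, t j) = ⨅ j ∈ s, affineSpan k (b '' t j) := by
  rw [b.ind.affineSpan_image_biInter t hs, b.tot, top_inf_eq]

end

theorem affineSpan_compl_eq_iInf_hyperplanes_general {n : ℕ}
    (x : Fin (n + 1) → EuclideanSpace ℝ (Fin n))
    (hx : affineSpan ℝ (Set.range x) = ⊤)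
    (V' : Set (Fin (n + 1))) :
    affineSpan ℝ (x '' V'ᶜ) = ⨅ i ∈ V', affineSpan ℝ (x '' {j | j ≠ i}) := by
  have hind : AffineIndependent ℝ x :=
    affineIndependent_of_affineSpan_eq_top_of_card_eq_finrank_add_one hx (by simp)
  have hcompl : V'ᶜ = ⋂ i ∈ V', {j | j ≠ i} := by
    ext j
    simp only [Set.mem_compl_iff, Set.mem_iInter, Set.mem_ofPred_eq]
    exact ⟨fun hj i hi hji => hj (hji ▸ hi), fun h hj => h j hj rfl⟩
  rw [hcompl]
  exact AffineBasis.affineSpan_image_biInter ⟨x, hind, hx⟩ _ V'.toFinite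

theorem affineSpan_compl_eq_iInf_hyperplanes {n : ℕ} (hn : 1 ≤ n)
    (x : Fin (n + 1) → EuclideanSpace ℝ (Fin n))
    (hx : affineSpan ℝ (Set.range x) = ⊤)
    (V' : Set (Fin (n + 1))) (hV' : V' ≠ Set.univ) :
    affineSpan ℝ (x '' V'ᶜ) = ⨅ i ∈ V', affineSpan ℝ (x '' {j | j ≠ i}) :=
  affineSpan_compl_eq_iInf_hyperplanes_general x hx V'
end

section
/- Let N > n ≥ 1 and let x : Fin N → EuclideanSpace ℝ (Fin n) be a non-degenerate configuration. Then there exist at least N - n distinct subsets S : Finset (Fin N) with S.card = n + 1 such that affineSpan ℝ (x '' ↑S) = ⊤; that is, the collection {S : Finset (Fin N) | S.card = n + 1 ∧ affineSpan ℝ (x '' ↑S) = ⊤} has at least N - n elements. -/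
/-!
Pick indices `T` whose points form an affine basis; it has `finrank + 1` elements. For `i ∉ T`
some barycentric coordinate of `x i` with respect to this basis is nonzero, say the one at
`j ∈ T`; then `x i` lies off the facet opposite `x j`, so replacing `j` by `i` in `T` gives
another affine basis. These sets `insert i (T.erase j)` are pairwise distinct and distinct from
`T`, since `i` is the only index outside `T` they contain.
-/

open Module Set

section Affine

variable {k V P ι : Type*} [DivisionRing k] [AddCommGroup V] [Module k V] [AddTorsor V P]

theorem AffineBasis.coord_eq_zero_of_mem_affineSpan_image_ne (b : AffineBasis ι k P) {j : ι}
    {q : P} (hq : q ∈ affineSpan k (b '' {t | t ≠ j})) : b.coord j q = 0 := by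
  have hle : affineSpan k (b '' {t | t ≠ j}) ≤ (affineSpan k {(0 : k)}).comap (b.coord j) :=
    affineSpan_le.2 <| by
      rintro _ ⟨t, ht, rfl⟩
      simp [b.coord_apply_ne (Ne.symm ht)]
  simpa [AffineSubspace.mem_comap] using hle hq

theorem AffineBasis.exists_notMem_affineSpan_image_ne [Fintype ι] (b : AffineBasis ι k P)
    (q : P) : ∃ j, q ∉ affineSpan k (b '' {t | t ≠ j}) := by
  by_contra! h
  simpa [b.coord_eq_zero_of_mem_affineSpan_image_ne (h _)] using b.sum_coord_apply_eq_one q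

theorem exists_affineIndependent_affineSpan_image_eq_top {x : ι → P}
    (hx : affineSpan k (range x) = ⊤) :
    ∃ u : Set ι, AffineIndependent k (fun t : u => x t) ∧ affineSpan k (x '' u) = ⊤ := by
  obtain ⟨s, hsx, hspan, hind⟩ := exists_affineIndependent k V (range x)
  obtain ⟨u, rfl, hinj⟩ := exists_image_eq_injOn_of_subset_range hsx
  exact ⟨u, hind.comp_embedding hinj.bijOn_image.equiv.toEmbedding, hspan.trans hx⟩

theorem exists_affineSpan_image_insert_erase_eq_top [FiniteDimensional k V] [DecidableEq ι]
    {x : ι → P} {T : Finset ι} (hind : AffineIndependent k (fun t : T => x t))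
    (hspan : affineSpan k (x '' T) = ⊤) (i : ι) :
    ∃ j ∈ T, affineSpan k (x '' ↑(insert i (T.erase j))) = ⊤ := by
  let b : AffineBasis T k P := ⟨fun t => x t, hind, by rwa [image_eq_range] at hspan⟩
  obtain ⟨j, hj⟩ := b.exists_notMem_affineSpan_image_ne (x i)
  have hupd := b.ind.affineIndependent_update_of_notMem_affineSpan hj
  have htop : affineSpan k (range (Function.update b j (x i))) = ⊤ :=
    hupd.affineSpan_eq_top_iff_card_eq_finrank_add_one.2 b.card_eq_finrank_add_one
  refine ⟨j, j.2, eq_top_iff.2 (htop ▸ affineSpan_mono k ?_)⟩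
  rintro _ ⟨t, rfl⟩
  by_cases htj : t = j
  · subst htj
    simp
  · refine ⟨t, ?_, (Function.update_of_ne htj (x i) b).symm⟩
    simp [Subtype.coe_injective.ne htj]

end Affine

theorem Finset.card_compl_add_one_le_ncard {α : Type*} [Fintype α] [DecidableEq α]
    {𝒮 : Set (Finset α)} {T : Finset α} (hT : T ∈ 𝒮)
    (h : ∀ i ∉ T, ∃ S ∈ 𝒮, i ∈ S ∧ S ⊆ insert i T) : Tᶜ.card + 1 ≤ 𝒮.ncard := by
  choose! F hF𝒮 hiF hFT using h
  have hinj : InjOn F ↑Tᶜ := by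
    intro i hi i' hi' hii'
    have := hFT i' (mem_compl.1 hi') (hii' ▸ hiF i (mem_compl.1 hi))
    simpa [mem_compl.1 hi] using this
  have hT_notMem : T ∉ Tᶜ.image F := by
    simp only [mem_image, mem_compl, not_exists, not_and]
    exact fun i hi hFi => hi (hFi ▸ hiF i hi)
  calc Tᶜ.card + 1 = (insert T (Tᶜ.image F)).card := by
        rw [card_insert_of_notMem hT_notMem, card_image_of_injOn hinj]
    _ = (↑(insert T (Tᶜ.image F)) : Set (Finset α)).ncard := (ncard_coe_finset _).symm
    _ ≤ 𝒮.ncard := by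
      refine ncard_le_ncard ?_ (toFinite _)
      intro S hS
      rw [coe_insert, coe_image] at hS
      rcases hS with rfl | ⟨i, hi, rfl⟩
      exacts [hT, hF𝒮 i (mem_compl.1 hi)]

theorem card_sub_finrank_le_ncard_affineSpan_eq_top {k V P ι : Type*} [DivisionRing k]
    [AddCommGroup V] [Module k V] [AddTorsor V P] [Fintype ι] [FiniteDimensional k V]
    {x : ι → P} (hx : affineSpan k (range x) = ⊤) :
    Fintype.card ι - finrank k V ≤
      {S : Finset ι | S.card = finrank k V + 1 ∧ affineSpan k (x '' ↑S) = ⊤}.ncard := by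
  classical
  obtain ⟨T, hind, hspan⟩ := exists_affineIndependent_affineSpan_image_eq_top hx
  lift T to Finset ι using T.toFinite
  have hcard : T.card = finrank k V + 1 := by
    simpa using hind.affineSpan_eq_top_iff_card_eq_finrank_add_one.1
      (by rwa [image_eq_range] at hspan)
  have hle : T.card ≤ Fintype.card ι := T.card_le_univ
  refine le_trans (by rw [T.card_compl]; omega)
    (Finset.card_compl_add_one_le_ncard ⟨hcard, hspan⟩ fun i hi => ?_)
  obtain ⟨j, hj, hspan'⟩ := exists_affineSpan_image_insert_erase_eq_top hind hspan i
  refine ⟨insert i (T.erase j), ⟨?_, hspan'⟩, Finset.mem_insert_self _ _,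
    Finset.insert_subset_insert _ (Finset.erase_subset _ _)⟩
  rw [Finset.card_insert_of_notMem (fun h => hi (Finset.mem_of_mem_erase h)),
    Finset.card_erase_of_mem hj]
  omega

theorem card_nondegenerate_subconfigurations_general {N n : ℕ}
    (x : Fin N → EuclideanSpace ℝ (Fin n))
    (hx : affineSpan ℝ (Set.range x) = ⊤) :
    N - n ≤ {S : Finset (Fin N) | S.card = n + 1 ∧ affineSpan ℝ (x '' ↑S) = ⊤}.ncard := by
  simpa using card_sub_finrank_le_ncard_affineSpan_eq_top hx

theorem card_nondegenerate_subconfigurations {N n : ℕ} (hn : 1 ≤ n) (hN : n < N)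
    (x : Fin N → EuclideanSpace ℝ (Fin n))
    (hx : affineSpan ℝ (Set.range x) = ⊤) :
    N - n ≤ {S : Finset (Fin N) | S.card = n + 1 ∧ affineSpan ℝ (x '' ↑S) = ⊤}.ncard :=
  card_nondegenerate_subconfigurations_general x hx
end

section
/- Let E be a digraph on Fin N and suppose there is a path from i to j in E, i.e. Relation.TransGen E i j holds. Then A i j belongs to the Lie subalgebra of Matrix (Fin N) (Fin N) ℝ generated by the set {A k l | E k l}, i.e. A i j ∈ LieSubalgebra.lieSpan ℝ (Matrix (Fin N) (Fin N) ℝ) {M | ∃ k l, E k l ∧ M = A k l}. -/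
attribute [local instance 100] LieRing.ofAssociativeRing

/-- The negative of the Laplacian of the single-edge digraph `i → j`. -/
def edgeMatrix {N : ℕ} (i j : Fin N) : Matrix (Fin N) (Fin N) ℝ :=
  Matrix.single i j 1 - Matrix.single i i 1

lemma edgeMatrix_self {N : ℕ} (i : Fin N) : edgeMatrix i i = 0 :=
  sub_self _

lemma edgeMatrix_eq_lie_add {N : ℕ} {i k j : Fin N} (hik : i ≠ k) (hij : i ≠ j) :
    edgeMatrix i j = ⁅edgeMatrix i k, edgeMatrix k j⁆ + edgeMatrix i k := by
  simp only [edgeMatrix, Ring.lie_def, sub_mul, mul_sub, mul_one,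
    Matrix.single_mul_single_same, Matrix.single_mul_single_of_ne _ _ _ _ hik,
    Matrix.single_mul_single_of_ne _ _ _ _ hik.symm,
    Matrix.single_mul_single_of_ne _ _ _ _ hij.symm]
  abel

theorem edgeMatrix_mem_lieSpan_of_path {N : ℕ} (E : Fin N → Fin N → Prop)
    (i j : Fin N) (hpath : Relation.TransGen E i j) :
    edgeMatrix i j ∈ LieSubalgebra.lieSpan ℝ (Matrix (Fin N) (Fin N) ℝ)
      {M | ∃ k l, E k l ∧ M = edgeMatrix k l} := by
  induction hpath with
  | single hij => exact LieSubalgebra.subset_lieSpan ⟨i, _, hij, rfl⟩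
  | @tail k j _ hkj ih =>
    obtain rfl | hij := eq_or_ne i j
    · rw [edgeMatrix_self]
      exact zero_mem _
    obtain rfl | hik := eq_or_ne i k
    · exact LieSubalgebra.subset_lieSpan ⟨i, j, hkj, rfl⟩
    rw [edgeMatrix_eq_lie_add hik hij]
    exact add_mem (LieSubalgebra.lie_mem _ ih (LieSubalgebra.subset_lieSpan ⟨k, j, hkj, rfl⟩)) ih
end

section
/- Let n ≥ 1 and let E be a weakly connected digraph on Fin N such that every maximal strong component of E has more than n + 1 elements. Let x : Fin N → EuclideanSpace ℝ (Fin n) be a configuration such that for every maximal strong component C of E, affineSpan ℝ (x '' C) = ⊤, and let X : Matrix (Fin N) (Fin n) ℝ be the matrix with entries X i k = x i k. Then Submodule.span ℝ {M | ∃ i j, Relation.TransGen E i j ∧ M = A i j * X} = ⊤, i.e. these matrices span all of Matrix (Fin N) (Fin n) ℝ (a space of dimension n·N). -/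
/-- The matrix whose `i`-th row is the point `x i`. -/
def configMatrix {N n : ℕ} (x : Fin N → EuclideanSpace ℝ (Fin n)) :
    Matrix (Fin N) (Fin n) ℝ :=
  Matrix.of fun i k => x i k

open Relation

section StrongComponent

variable {α : Type*} (E : α → α → Prop)

def strongComponent (v : α) : Set α :=
  {w | ReflTransGen E v w ∧ ReflTransGen E w v}

variable {E}

theorem transGen_self_of_mem_strongComponent {v w : α} (hw : w ∈ strongComponent E v)
    (hC : 1 < (strongComponent E v).ncard) : TransGen E w w := by
  obtain ⟨u, hu, huw⟩ := Set.exists_ne_of_one_lt_ncard hC w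
  have hwu : TransGen E w u :=
    (reflTransGen_iff_eq_or_transGen.mp (hw.2.trans hu.1)).resolve_left huw
  exact hwu.trans_left (hu.2.trans hw.1)

end StrongComponent

/-- Minimise the size of the forward-reachable set among vertices reachable from `i`. -/
theorem exists_reflTransGen_isMaxSCC {N : ℕ} (E : Fin N → Fin N → Prop) (i : Fin N) :
    ∃ v, ReflTransGen E i v ∧ IsMaxSCC E (strongComponent E v) := by
  let reach : Fin N → Set (Fin N) := fun v => {w | ReflTransGen E v w}
  obtain ⟨v, hiv, hmin⟩ := Set.exists_min_image {v | ReflTransGen E i v}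
    (fun v => (reach v).ncard) (Set.toFinite _) ⟨i, .refl⟩
  refine ⟨v, hiv, ⟨v, ⟨.refl, .refl⟩, rfl⟩, ?_⟩
  rintro u ⟨hvu, -⟩ w huw
  have hvw : ReflTransGen E v w := hvu.tail huw
  have hreach : reach w = reach v :=
    Set.eq_of_subset_of_ncard_le (fun z hz => hvw.trans hz) (hmin w (hiv.trans hvw))
      (Set.toFinite _)
  exact ⟨hvw, show v ∈ reach w from hreach ▸ ReflTransGen.refl⟩

theorem span_vsub_eq_top_of_affineSpan_eq_top {k V P : Type*} [Ring k] [AddCommGroup V]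
    [Module k V] [AddTorsor V P] {s : Set P} (hs : affineSpan k s = ⊤) (p : P) :
    Submodule.span k ((· -ᵥ p) '' s) = ⊤ := by
  refine top_unique ?_
  calc ⊤ = vectorSpan k s :=
        (AffineSubspace.vectorSpan_eq_top_of_affineSpan_eq_top k V P hs).symm
    _ ≤ vectorSpan k (insert p s) := vectorSpan_mono k (Set.subset_insert p s)
    _ = Submodule.span k ((· -ᵥ p) '' s) := by
      rw [vectorSpan_eq_span_vsub_set_right k (Set.mem_insert p s), Set.image_insert_eq,
        vsub_self, Submodule.span_insert_zero]

section RowMatrix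

variable {m n : Type*} [DecidableEq m]

def rowMatrix (i : m) : EuclideanSpace ℝ n →ₗ[ℝ] Matrix m n ℝ :=
  (Matrix.ofLinearEquiv ℝ).toLinearMap ∘ₗ LinearMap.single ℝ (fun _ => n → ℝ) i ∘ₗ
    (WithLp.linearEquiv 2 ℝ (n → ℝ)).toLinearMap

theorem iSup_range_rowMatrix [Finite m] :
    ⨆ i : m, LinearMap.range (rowMatrix (n := n) i) = ⊤ := by
  simp only [rowMatrix, LinearMap.range_comp_of_range_eq_top _ (LinearEquiv.range _),
    LinearMap.range_comp, ← Submodule.map_iSup, LinearMap.iSup_range_single, Submodule.map_top,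
    LinearEquiv.range]

end RowMatrix

theorem edgeMatrix_mul_configMatrix {N n : ℕ} (x : Fin N → EuclideanSpace ℝ (Fin n))
    (i j : Fin N) : edgeMatrix i j * configMatrix x = rowMatrix i (x j - x i) := by
  ext a b
  rcases eq_or_ne a i with rfl | ha
  · simp [edgeMatrix, rowMatrix, configMatrix, Matrix.sub_mul, Matrix.single_mul_apply_same]
  · simp [edgeMatrix, rowMatrix, configMatrix, Matrix.sub_mul, Matrix.single_mul_apply_of_ne, ha]

theorem lie_algebra_rank_condition_general {N n : ℕ}
    (E : Fin N → Fin N → Prop)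
    (hbig : ∀ C : Set (Fin N), IsMaxSCC E C → n + 1 < C.ncard)
    (x : Fin N → EuclideanSpace ℝ (Fin n))
    (hx : ∀ C : Set (Fin N), IsMaxSCC E C → affineSpan ℝ (x '' C) = ⊤) :
    Submodule.span ℝ
      {M : Matrix (Fin N) (Fin n) ℝ |
        ∃ i j, Relation.TransGen E i j ∧ M = edgeMatrix i j * configMatrix x} = ⊤ := by
  rw [eq_top_iff, ← iSup_range_rowMatrix]
  refine iSup_le fun i => ?_
  obtain ⟨v, hiv, hC⟩ := exists_reflTransGen_isMaxSCC E i
  have hpath : ∀ w ∈ strongComponent E v, TransGen E i w := fun w hw =>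
    TransGen.trans_right (hiv.trans hw.1)
      (transGen_self_of_mem_strongComponent hw ((Nat.le_add_left 1 n).trans_lt (hbig _ hC)))
  have hspan : Submodule.span ℝ ((fun j => x j - x i) '' {j | TransGen E i j}) = ⊤ := by
    refine top_unique ?_
    rw [← span_vsub_eq_top_of_affineSpan_eq_top (hx _ hC) (x i), Set.image_image]
    exact Submodule.span_mono (Set.image_mono hpath)
  rw [LinearMap.range_eq_map, ← hspan, Submodule.map_span, Submodule.span_le]
  rintro _ ⟨_, ⟨j, hj, rfl⟩, rfl⟩
  exact Submodule.subset_span ⟨i, j, hj, (edgeMatrix_mul_configMatrix x i j).symm⟩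

theorem lie_algebra_rank_condition {N n : ℕ} (hn : 1 ≤ n)
    (E : Fin N → Fin N → Prop)
    (hwc : ∀ i j : Fin N, Relation.ReflTransGen (fun a b => E a b ∨ E b a) i j)
    (hbig : ∀ C : Set (Fin N), IsMaxSCC E C → n + 1 < C.ncard)
    (x : Fin N → EuclideanSpace ℝ (Fin n))
    (hx : ∀ C : Set (Fin N), IsMaxSCC E C → affineSpan ℝ (x '' C) = ⊤) :
    Submodule.span ℝ
      {M : Matrix (Fin N) (Fin n) ℝ |
        ∃ i j, Relation.TransGen E i j ∧ M = edgeMatrix i j * configMatrix x} = ⊤ :=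
  lie_algebra_rank_condition_general E hbig x hx
end

section
/- Let N ≥ 1 and let x : Fin N → EuclideanSpace ℝ (Fin n) be a configuration of rank k, i.e. Module.finrank ℝ (vectorSpan ℝ (Set.range x)) = k, and let X : Matrix (Fin N) (Fin n) ℝ be the matrix with entries X i k = x i k. Then Module.finrank ℝ (Submodule.span ℝ {M' | ∃ M : Matrix (Fin N) (Fin N) ℝ, M.mulVec (fun _ => (1:ℝ)) = 0 ∧ M' = M * X}) = k * N. In particular, if k < n these products do not span Matrix (Fin N) (Fin n) ℝ, so the Lie algebra rank condition fails at any degenerate configuration. -/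
open Module

namespace Matrix

variable {R l m n : Type*} [Ring R] [Fintype m] [DecidableEq m]

theorem mem_vectorSpan_range_row_iff (X : Matrix m n R) (v : n → R) :
    v ∈ vectorSpan R (Set.range X.row) ↔ ∃ c : m → R, ∑ i, c i = 0 ∧ c ᵥ* X = v := by
  constructor
  · let S : Submodule R (n → R) :=
      (LinearMap.ker (Fintype.linearCombination R fun _ : m => (1 : R))).map X.vecMulLinear
    suffices vectorSpan R (Set.range X.row) ≤ S by
      intro hv
      obtain ⟨c, hc, rfl⟩ := this hv
      exact ⟨c, by simpa [Fintype.linearCombination_apply] using hc, rfl⟩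
    rw [vectorSpan_def, Submodule.span_le]
    rintro _ ⟨_, ⟨a, rfl⟩, _, ⟨b, rfl⟩, rfl⟩
    refine ⟨Pi.single a 1 - Pi.single b 1, ?_, ?_⟩
    · simp [Fintype.linearCombination_apply]
    · simp [row_def]
  · rintro ⟨c, hc, rfl⟩
    have h := weightedVSub_mem_vectorSpan hc X.row
    rw [Finset.weightedVSub_eq_weightedVSubOfPoint_of_sum_eq_zero _ _ _ hc 0,
      Finset.weightedVSubOfPoint_apply] at h
    simpa [vecMul_eq_sum, row_def] using h

theorem span_zeroRowSum_mul_eq_map_pi (X : Matrix m n R) :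
    Submodule.span R
        {Y : Matrix l n R | ∃ M : Matrix l m R, M *ᵥ (fun _ => 1) = 0 ∧ Y = M * X} =
      (Submodule.pi Set.univ fun _ : l => vectorSpan R (Set.range X.row)).map
        (ofLinearEquiv R).toLinearMap := by
  rw [Submodule.map_equiv_eq_comap_symm]
  suffices {Y : Matrix l n R | ∃ M : Matrix l m R, M *ᵥ (fun _ => 1) = 0 ∧ Y = M * X} =
      ((Submodule.pi Set.univ fun _ : l => vectorSpan R (Set.range X.row)).comap
        (ofLinearEquiv R).symm.toLinearMap : Set (Matrix l n R)) by
    rw [this, Submodule.span_eq]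
  ext Y
  simp only [Set.mem_ofPred_eq, SetLike.mem_coe, Submodule.mem_comap, Submodule.mem_pi,
    Set.mem_univ, true_implies, mem_vectorSpan_range_row_iff]
  constructor
  · rintro ⟨M, hM, rfl⟩ i
    exact ⟨M i, by simpa [mulVec, dotProduct] using congrFun hM i,
      (mul_apply_eq_vecMul _ _ _).symm⟩
  · intro h
    choose M hM hMX using h
    refine ⟨of M, funext fun i => by simpa [mulVec, dotProduct] using hM i, ext_row fun i => ?_⟩
    exact ((mul_apply_eq_vecMul (of M) X i).trans (hMX i)).symm

end Matrix

theorem Submodule.finrank_pi_univ_const {K V ι : Type*} [DivisionRing K] [AddCommGroup V]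
    [Module K V] [FiniteDimensional K V] [Fintype ι] (p : Submodule K V) :
    finrank K (Submodule.pi Set.univ fun _ : ι => p) = Fintype.card ι * finrank K p := by
  have hrange :
      Submodule.pi Set.univ (fun _ : ι => p) = LinearMap.range (p.subtype.compLeft ι) := by
    rw [LinearMap.range_compLeft, p.range_subtype]
  rw [hrange, LinearMap.finrank_range_of_inj p.injective_subtype.comp_left, finrank_pi_fintype]
  simp

theorem finrank_vectorSpan_range_configMatrix_row {N n : ℕ}
    (x : Fin N → EuclideanSpace ℝ (Fin n)) :
    finrank ℝ (vectorSpan ℝ (Set.range (configMatrix x).row)) =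
      finrank ℝ (vectorSpan ℝ (Set.range x)) := by
  let e := WithLp.linearEquiv 2 ℝ (Fin n → ℝ)
  have hrows : Set.range (configMatrix x).row = e '' Set.range x := by
    rw [← Set.range_comp]
    rfl
  have hmap := e.toLinearMap.toAffineMap.map_vectorSpan (s := Set.range x)
  simp only [LinearMap.toAffineMap_linear, LinearMap.coe_toAffineMap, LinearEquiv.coe_coe] at hmap
  rw [hrows, ← hmap, e.finrank_map_eq]

theorem finrank_span_zeroRowSum_mul_config_general {N n k : ℕ}
    (x : Fin N → EuclideanSpace ℝ (Fin n))
    (hx : Module.finrank ℝ (vectorSpan ℝ (Set.range x)) = k) :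
    Module.finrank ℝ (Submodule.span ℝ
      {M' : Matrix (Fin N) (Fin n) ℝ |
        ∃ M : Matrix (Fin N) (Fin N) ℝ,
          M.mulVec (fun _ => (1 : ℝ)) = 0 ∧ M' = M * configMatrix x}) = k * N := by
  rw [Matrix.span_zeroRowSum_mul_eq_map_pi, LinearEquiv.finrank_map_eq,
    Submodule.finrank_pi_univ_const, finrank_vectorSpan_range_configMatrix_row, hx,
    Fintype.card_fin, mul_comm]

theorem finrank_span_zeroRowSum_mul_config {N n k : ℕ} (hN : 1 ≤ N)
    (x : Fin N → EuclideanSpace ℝ (Fin n))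
    (hx : Module.finrank ℝ (vectorSpan ℝ (Set.range x)) = k) :
    Module.finrank ℝ (Submodule.span ℝ
      {M' : Matrix (Fin N) (Fin n) ℝ |
        ∃ M : Matrix (Fin N) (Fin N) ℝ,
          M.mulVec (fun _ => (1 : ℝ)) = 0 ∧ M' = M * configMatrix x}) = k * N :=
  finrank_span_zeroRowSum_mul_config_general x hx
end

section
/- Let n ≥ 1, let k ≤ n, and let N ≥ k + 1. Then the closure in the space Fin N → EuclideanSpace ℝ (Fin n) of the set {x : Fin N → EuclideanSpace ℝ (Fin n) | Module.finrank ℝ (vectorSpan ℝ (Set.range x)) = k} of configurations of rank exactly k equals the set {x : Fin N → EuclideanSpace ℝ (Fin n) | Module.finrank ℝ (vectorSpan ℝ (Set.range x)) ≤ k} of configurations of rank at most k. -/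
open Module Set Function

/-- Step lemma: a configuration of rank `r` can be perturbed to one of rank `r + 1`. -/
lemma rank_step {N n : ℕ} (x : Fin N → EuclideanSpace ℝ (Fin n)) {r : ℕ}
    (hr : Module.finrank ℝ (vectorSpan ℝ (Set.range x)) = r)
    (hrn : r < n) (hrN : r + 2 ≤ N) {ε : ℝ} (hε : 0 < ε) :
    ∃ y : Fin N → EuclideanSpace ℝ (Fin n), dist y x < ε ∧
      Module.finrank ℝ (vectorSpan ℝ (Set.range y)) = r + 1 := by
  classical
  set V := vectorSpan ℝ (Set.range x) with hV
  -- find a vector outside `V`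
  obtain ⟨v, hv⟩ : ∃ v, v ∉ V := by
    by_contra h
    push_neg at h
    have hVtop : V = ⊤ := Submodule.eq_top_iff'.2 h
    rw [hVtop, finrank_top, finrank_euclideanSpace_fin] at hr
    omega
  have hv0 : v ≠ 0 := fun h => hv (h ▸ V.zero_mem)
  -- a spanning affinely independent subset
  obtain ⟨t, hts, hspan, hindep⟩ :=
    exists_affineIndependent ℝ (EuclideanSpace ℝ (Fin n)) (Set.range x)
  have htfin : t.Finite := (Set.finite_range x).subset hts
  haveI : Fintype t := htfin.fintype
  have hvs : vectorSpan ℝ t = V := by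
    rw [hV, ← direction_affineSpan, hspan, direction_affineSpan]
  have hcard : Fintype.card t ≤ r + 1 := by
    rcases h : Fintype.card t with _ | c
    · omega
    · have h2 := hindep.finrank_vectorSpan (n := c) h
      rw [Subtype.range_coe, hvs, hr] at h2
      omega
  -- choose preimages of `t`
  have hpre : ∀ a : t, ∃ i, x i = a := fun a => hts a.2
  choose g hg using hpre
  have hginj : Function.Injective g := fun a b h => Subtype.ext (by rw [← hg a, ← hg b, h])
  -- find an index not used by `t`
  obtain ⟨m, hm⟩ : ∃ m : Fin N, ∀ a : t, g a ≠ m := by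
    by_contra h
    push_neg at h
    have hsurj : Function.Surjective g := fun m => (h m)
    have := Fintype.card_le_of_surjective g hsurj
    simp only [Fintype.card_fin] at this
    omega
  -- a second reference index
  have hN2 : 2 ≤ N := by omega
  have hne01 : (⟨0, by omega⟩ : Fin N) ≠ ⟨1, by omega⟩ := by simp [Fin.ext_iff]
  obtain ⟨j0, hj0m⟩ : ∃ j0 : Fin N, j0 ≠ m := by
    rcases eq_or_ne m ⟨0, by omega⟩ with h | h
    · exact ⟨⟨1, by omega⟩, by rw [h]; exact hne01.symm⟩
    · exact ⟨⟨0, by omega⟩, fun hh => h hh.symm⟩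
  -- the perturbation
  set c : ℝ := ε / (2 * (‖v‖ + 1)) with hc
  have hcpos : 0 < c := by positivity
  set y : Fin N → EuclideanSpace ℝ (Fin n) := Function.update x m (x m + c • v) with hy
  have hym : y m = x m + c • v := Function.update_self m _ x
  have hyne : ∀ i : Fin N, i ≠ m → y i = x i := fun i hi => Function.update_of_ne hi _ x
  -- distance estimate
  have hdist : dist y x < ε := by
    rw [dist_pi_lt_iff hε]
    intro i
    rcases eq_or_ne i m with rfl | hi
    · rw [hym, dist_eq_norm, add_sub_cancel_left, norm_smul, Real.norm_eq_abs,
        abs_of_pos hcpos, hc]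
      rw [div_mul_eq_mul_div, div_lt_iff₀ (by positivity)]
      nlinarith [norm_nonneg v]
    · rw [hyne i hi]; simpa using hε
  refine ⟨y, hdist, ?_⟩
  -- `V ≤ vectorSpan (range y)`
  have hA : V ≤ vectorSpan ℝ (Set.range y) := by
    have hty : t ⊆ Set.range y := by
      intro a ha
      refine ⟨g ⟨a, ha⟩, ?_⟩
      rw [hyne _ (hm ⟨a, ha⟩), hg ⟨a, ha⟩]
    calc V = vectorSpan ℝ t := hvs.symm
      _ ≤ vectorSpan ℝ (Set.range y) := vectorSpan_mono ℝ hty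
  -- `v ∈ vectorSpan (range y)`
  have hxmV : x m -ᵥ x j0 ∈ V := vsub_mem_vectorSpan ℝ (mem_range_self m) (mem_range_self j0)
  have hcv : c • v ∈ vectorSpan ℝ (Set.range y) := by
    have h1 : y m -ᵥ y j0 ∈ vectorSpan ℝ (Set.range y) :=
      vsub_mem_vectorSpan ℝ (mem_range_self m) (mem_range_self j0)
    have h2 : c • v = (y m -ᵥ y j0) - (x m -ᵥ x j0) := by
      rw [hym, hyne j0 hj0m, vsub_eq_sub, vsub_eq_sub]
      abel
    rw [h2]
    exact Submodule.sub_mem _ h1 (hA hxmV)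
  have hvmem : v ∈ vectorSpan ℝ (Set.range y) := by
    have := Submodule.smul_mem _ c⁻¹ hcv
    rwa [smul_smul, inv_mul_cancel₀ hcpos.ne', one_smul] at this
  -- `vectorSpan (range y) ≤ V ⊔ span {v}`
  have hC : vectorSpan ℝ (Set.range y) ≤ V ⊔ Submodule.span ℝ {v} := by
    rw [vectorSpan_def]
    rw [Submodule.span_le]
    rintro w hw
    rw [Set.mem_vsub] at hw
    obtain ⟨p, ⟨i, rfl⟩, q, ⟨j, rfl⟩, rfl⟩ := hw
    have hyd : ∀ i : Fin N, y i - x i ∈ Submodule.span ℝ {v} := by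
      intro i
      rcases eq_or_ne i m with rfl | hi
      · rw [hym, add_sub_cancel_left]
        exact Submodule.smul_mem _ _ (Submodule.mem_span_singleton_self v)
      · rw [hyne i hi, sub_self]; exact Submodule.zero_mem _
    have hxij : x i -ᵥ x j ∈ V := vsub_mem_vectorSpan ℝ (mem_range_self i) (mem_range_self j)
    have heq : y i -ᵥ y j = (x i -ᵥ x j) + ((y i - x i) - (y j - x j)) := by
      rw [vsub_eq_sub, vsub_eq_sub]; abel
    rw [heq]
    exact Submodule.add_mem _ (Submodule.mem_sup_left hxij)
      (Submodule.mem_sup_right (Submodule.sub_mem _ (hyd i) (hyd j)))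
  -- conclude
  have hVS : vectorSpan ℝ (Set.range y) = V ⊔ Submodule.span ℝ {v} := by
    refine le_antisymm hC (sup_le hA ?_)
    rwa [Submodule.span_singleton_le_iff_mem]
  have hinf : V ⊓ Submodule.span ℝ {v} = ⊥ := by
    rw [Submodule.eq_bot_iff]
    rintro w ⟨hw1, hw2⟩
    obtain ⟨a, rfl⟩ := Submodule.mem_span_singleton.1 hw2
    rcases eq_or_ne a 0 with rfl | ha
    · simp
    · exfalso
      apply hv
      have := Submodule.smul_mem V a⁻¹ hw1
      rwa [smul_smul, inv_mul_cancel₀ ha, one_smul] at this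
  have hfr := Submodule.finrank_sup_add_finrank_inf_eq V (Submodule.span ℝ {v})
  rw [hinf, finrank_bot, add_zero, hr, finrank_span_singleton hv0] at hfr
  rw [hVS, hfr]

/-- Any configuration of rank `≤ k` can be approximated by configurations of rank exactly `k`. -/
lemma rank_approx {N n k : ℕ} (hk : k ≤ n) (hN : k + 1 ≤ N) :
    ∀ (d : ℕ) (x : Fin N → EuclideanSpace ℝ (Fin n)),
      Module.finrank ℝ (vectorSpan ℝ (Set.range x)) + d = k → ∀ ε : ℝ, 0 < ε →
      ∃ y, dist x y < ε ∧ Module.finrank ℝ (vectorSpan ℝ (Set.range y)) = k := by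
  intro d
  induction d with
  | zero => exact fun x hx ε hε => ⟨x, by simpa using hε, by omega⟩
  | succ d ih =>
    intro x hx ε hε
    obtain ⟨y1, hd1, hr1⟩ := rank_step x rfl (by omega) (by omega) (half_pos hε)
    obtain ⟨y, hd2, hr2⟩ := ih y1 (by omega) (ε / 2) (half_pos hε)
    refine ⟨y, ?_, hr2⟩
    calc dist x y ≤ dist x y1 + dist y1 y := dist_triangle _ _ _
      _ < ε / 2 + ε / 2 := by rw [dist_comm x y1]; exact add_lt_add hd1 hd2
      _ = ε := add_halves ε

/-- The set of configurations of rank at most `k` is closed. -/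
lemma isClosed_rank_le {N n k : ℕ} (hN : 1 ≤ N) :
    IsClosed {x : Fin N → EuclideanSpace ℝ (Fin n) |
      Module.finrank ℝ (vectorSpan ℝ (Set.range x)) ≤ k} := by
  classical
  rw [← isOpen_compl_iff, isOpen_iff_mem_nhds]
  intro x hx
  simp only [mem_compl_iff, mem_setOf_eq, not_le] at hx
  set j0 : Fin N := ⟨0, by omega⟩
  set D : Set (EuclideanSpace ℝ (Fin n)) := (· -ᵥ x j0) '' Set.range x with hD
  have hDspan : Submodule.span ℝ D = vectorSpan ℝ (Set.range x) :=
    (vectorSpan_eq_span_vsub_set_right ℝ (mem_range_self j0)).symm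
  obtain ⟨b, hbD, hbspan, hbind⟩ := exists_linearIndependent ℝ D
  have hbfin : b.Finite := (((Set.finite_range x).image _).subset hbD)
  haveI : Fintype b := hbfin.fintype
  have hbcard : k + 1 ≤ Fintype.card b := by
    have h1 := finrank_span_set_eq_card hbind
    rw [hbspan, hDspan] at h1
    rw [← Set.toFinset_card] at *
    omega
  obtain ⟨f⟩ : Nonempty (Fin (k + 1) ↪ b) :=
    Function.Embedding.nonempty_of_card_le (by simpa using hbcard)
  have hfD : ∀ s : Fin (k + 1), ∃ i, x i -ᵥ x j0 = (f s : EuclideanSpace ℝ (Fin n)) := by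
    intro s
    obtain ⟨p, ⟨i, rfl⟩, hp⟩ := hbD (f s).2
    exact ⟨i, hp⟩
  choose ψ hψ using hfD
  have hxind : LinearIndependent ℝ
      (fun s : Fin (k + 1) => x (ψ s) -ᵥ x j0 : Fin (k + 1) → EuclideanSpace ℝ (Fin n)) := by
    have : (fun s : Fin (k + 1) => x (ψ s) -ᵥ x j0) =
        (fun a : b => (a : EuclideanSpace ℝ (Fin n))) ∘ f := by
      funext s; exact hψ s
    rw [this]
    exact hbind.comp f f.injective
  have hcont : Continuous (fun y : Fin N → EuclideanSpace ℝ (Fin n) =>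
      (fun s : Fin (k + 1) => y (ψ s) -ᵥ y j0)) :=
    continuous_pi fun s => (continuous_apply (ψ s)).sub (continuous_apply j0)
  refine Filter.mem_of_superset
    ((isOpen_setOf_linearIndependent.preimage hcont).mem_nhds hxind) ?_
  intro y hy
  simp only [mem_preimage, mem_setOf_eq] at hy
  simp only [mem_compl_iff, mem_setOf_eq, not_le]
  have hle : Submodule.span ℝ
      (Set.range (fun s : Fin (k + 1) => y (ψ s) -ᵥ y j0)) ≤ vectorSpan ℝ (Set.range y) := by
    rw [Submodule.span_le]
    rintro w ⟨s, rfl⟩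
    exact vsub_mem_vectorSpan ℝ (mem_range_self (ψ s)) (mem_range_self j0)
  have hfr := finrank_span_eq_card hy
  rw [Fintype.card_fin] at hfr
  have := Submodule.finrank_mono hle
  omega

theorem closure_rank_eq_stratum {N n k : ℕ} (hn : 1 ≤ n) (hk : k ≤ n) (hN : k + 1 ≤ N) :
    closure {x : Fin N → EuclideanSpace ℝ (Fin n) |
        Module.finrank ℝ (vectorSpan ℝ (Set.range x)) = k} =
      {x : Fin N → EuclideanSpace ℝ (Fin n) |
        Module.finrank ℝ (vectorSpan ℝ (Set.range x)) ≤ k} := by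
  apply Set.Subset.antisymm
  · exact closure_minimal (fun x hx => le_of_eq hx) (isClosed_rank_le (by omega))
  · intro x hx
    simp only [Set.mem_setOf_eq] at hx
    rw [Metric.mem_closure_iff]
    intro ε hε
    obtain ⟨y, hy1, hy2⟩ := rank_approx hk hN
      (k - Module.finrank ℝ (vectorSpan ℝ (Set.range x))) x (by omega) ε hε
    exact ⟨y, hy2, hy1⟩
end
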